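/- arXiv:1904.09536 — 9 statements merged into one kernel-verified Lean document; each statement's English description precedes it below -/
import Mathlib

section
/- Let 0 ≤ q < 1, let α, β > 0 and γ, δ ≥ 0, and let N ∈ ℕ satisfy α·β = q^N·γ·δ. Set L = N+1 and, for 1 ≤ j ≤ L, let p_j = α/(α + γ·q^{j−1}). Then the product Bernoulli function P(τ₁,…,τ_L) = ∏_{j=1}^{L} p_j^{τ_j}·(1−p_j)^{1−τ_j} satisfies the ASEP stationarity equations with parameters (α,β,γ,δ,q). -/
/-!
Under the product measure every term of the stationarity equations vanishes on its own. With
`p_j = α / (α + γ q^(j-1))` one has `p_j / (1 - p_j) = α / (γ q^(j-1))`, so the rate balance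
`α (1 - p_1) = γ p_1` holds at the left reservoir, `p_k (1 - p_{k+1}) = q (1 - p_k) p_{k+1}`
holds across every bond, and `β p_L = δ (1 - p_L)` at the right reservoir is exactly
`α β = q^N γ δ`.
-/

noncomputable section

open scoped BigOperators

/-- numeric indicator of a Boolean site value: `1` if occupied, `0` if empty. -/
def indic (b : Bool) : ℝ := if b then 1 else 0

/-- `P : {0,1}^L → ℝ` satisfies the ASEP stationarity equations with
parameters `(α,β,γ,δ,q)`. -/
def ASEPStationary (q α β γ δ : ℝ) (L : ℕ) (hL : 0 < L) (P : (Fin L → Bool) → ℝ) : Prop :=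
  ∀ τ : Fin L → Bool,
    (indic (τ ⟨0, hL⟩) - indic (!τ ⟨0, hL⟩)) *
        (α * P (Function.update τ ⟨0, hL⟩ false) - γ * P (Function.update τ ⟨0, hL⟩ true))
      + (∑ k : Fin (L - 1),
          (indic (τ ⟨(k : ℕ) + 1, Nat.add_lt_of_lt_sub k.isLt⟩)
              - indic (τ ⟨(k : ℕ), Nat.lt_of_succ_lt (Nat.add_lt_of_lt_sub k.isLt)⟩)) *
            (P (Function.update (Function.update τ
                  ⟨(k : ℕ), Nat.lt_of_succ_lt (Nat.add_lt_of_lt_sub k.isLt)⟩ true)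
                  ⟨(k : ℕ) + 1, Nat.add_lt_of_lt_sub k.isLt⟩ false)
              - q * P (Function.update (Function.update τ
                  ⟨(k : ℕ), Nat.lt_of_succ_lt (Nat.add_lt_of_lt_sub k.isLt)⟩ false)
                  ⟨(k : ℕ) + 1, Nat.add_lt_of_lt_sub k.isLt⟩ true)))
      + (indic (!τ ⟨L - 1, Nat.sub_lt hL Nat.one_pos⟩)
            - indic (τ ⟨L - 1, Nat.sub_lt hL Nat.one_pos⟩)) *
          (β * P (Function.update τ ⟨L - 1, Nat.sub_lt hL Nat.one_pos⟩ true)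
            - δ * P (Function.update τ ⟨L - 1, Nat.sub_lt hL Nat.one_pos⟩ false)) = 0

open Finset Function

section ProductUpdate

variable {ι M β : Type*} [DecidableEq ι] [CommMonoid M]
  (g : ι → β → M) (τ : ι → β)

theorem prod_apply_update_of_mem {s : Finset ι} {i : ι} (hi : i ∈ s) (v : β) :
    ∏ j ∈ s, g j (update τ i v j) = g i v * ∏ j ∈ s \ {i}, g j (τ j) := by
  simp only [apply_update g τ i v]
  exact prod_update_of_mem hi _ _

theorem prod_apply_update_update [Fintype ι] {i j : ι} (hij : i ≠ j) (a b : β) :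
    ∏ k, g k (update (update τ i a) j b k) =
      g i a * g j b * ∏ k ∈ (univ \ {j}) \ {i}, g k (τ k) := by
  rw [prod_apply_update_of_mem g _ (mem_univ j),
    prod_apply_update_of_mem g τ (by simpa using hij), mul_left_comm, mul_assoc]

end ProductUpdate

theorem asepStationary_prod (q α β γ δ : ℝ) (L : ℕ) (hL : 0 < L) (g : Fin L → Bool → ℝ)
    (hleft : α * g ⟨0, hL⟩ false = γ * g ⟨0, hL⟩ true)
    (hbond : ∀ (k : ℕ) (hk : k + 1 < L),
      g ⟨k, by omega⟩ true * g ⟨k + 1, hk⟩ false =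
        q * (g ⟨k, by omega⟩ false * g ⟨k + 1, hk⟩ true))
    (hright : β * g ⟨L - 1, Nat.sub_lt hL Nat.one_pos⟩ true =
      δ * g ⟨L - 1, Nat.sub_lt hL Nat.one_pos⟩ false) :
    ASEPStationary q α β γ δ L hL (fun τ => ∏ j, g j (τ j)) := by
  set P : (Fin L → Bool) → ℝ := fun τ => ∏ j, g j (τ j)
  have left_balance : ∀ τ, α * P (update τ ⟨0, hL⟩ false) = γ * P (update τ ⟨0, hL⟩ true) := by
    intro τ
    simp only [P, prod_apply_update_of_mem g τ (mem_univ _)]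
    linear_combination (∏ j ∈ univ \ {⟨0, hL⟩}, g j (τ j)) * hleft
  have right_balance : ∀ τ, β * P (update τ ⟨L - 1, Nat.sub_lt hL Nat.one_pos⟩ true) =
      δ * P (update τ ⟨L - 1, Nat.sub_lt hL Nat.one_pos⟩ false) := by
    intro τ
    simp only [P, prod_apply_update_of_mem g τ (mem_univ _)]
    linear_combination (∏ j ∈ univ \ {⟨L - 1, Nat.sub_lt hL Nat.one_pos⟩}, g j (τ j)) * hright
  have bond_balance : ∀ τ (k : ℕ) (hk : k + 1 < L),
      P (update (update τ ⟨k, by omega⟩ true) ⟨k + 1, hk⟩ false) =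
        q * P (update (update τ ⟨k, by omega⟩ false) ⟨k + 1, hk⟩ true) := by
    intro τ k hk
    have hne : (⟨k, by omega⟩ : Fin L) ≠ ⟨k + 1, hk⟩ := by simp
    simp only [P, prod_apply_update_update g τ hne]
    linear_combination (∏ j ∈ (univ \ {⟨k + 1, hk⟩}) \ {⟨k, by omega⟩}, g j (τ j)) *
      hbond k hk
  intro τ
  simp only [left_balance, right_balance, bond_balance, sub_self, mul_zero,
    sum_const_zero, add_zero]

theorem stmt2_general (q α β γ δ : ℝ) (N : ℕ) (hq0 : 0 ≤ q)
    (hα : 0 < α) (hγ : 0 ≤ γ)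
    (hsing : α * β = q ^ N * γ * δ) :
    ASEPStationary q α β γ δ (N + 1) (Nat.succ_pos N)
      (fun τ : Fin (N + 1) → Bool =>
        ∏ j : Fin (N + 1),
          (if τ j then α / (α + γ * q ^ (j : ℕ))
            else 1 - α / (α + γ * q ^ (j : ℕ)))) := by
  have hD : ∀ n : ℕ, α + γ * q ^ n ≠ 0 := fun n => by positivity
  have one_sub : ∀ n : ℕ, 1 - α / (α + γ * q ^ n) = γ * q ^ n / (α + γ * q ^ n) := fun n => by
    rw [one_sub_div (hD n), add_sub_cancel_left]
  refine asepStationary_prod q α β γ δ (N + 1) _ (fun j b => if b then α / (α + γ * q ^ (j : ℕ))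
    else 1 - α / (α + γ * q ^ (j : ℕ))) ?_ ?_ ?_
  · simp only [Bool.false_eq_true, if_false, if_true, one_sub]
    ring
  · intro k hk
    simp only [Bool.false_eq_true, if_false, if_true, one_sub]
    field_simp
    ring
  · simp only [Bool.false_eq_true, if_false, if_true, one_sub, Nat.add_sub_cancel]
    field_simp
    linear_combination hsing

theorem stmt2 (q α β γ δ : ℝ) (N : ℕ) (hq0 : 0 ≤ q) (hq1 : q < 1)
    (hα : 0 < α) (hβ : 0 < β) (hγ : 0 ≤ γ) (hδ : 0 ≤ δ)
    (hsing : α * β = q ^ N * γ * δ) :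
    ASEPStationary q α β γ δ (N + 1) (Nat.succ_pos N)
      (fun τ : Fin (N + 1) → Bool =>
        ∏ j : Fin (N + 1),
          (if τ j then α / (α + γ * q ^ (j : ℕ))
            else 1 - α / (α + γ * q ^ (j : ℕ)))) :=
  stmt2_general q α β γ δ N hq0 hα hγ hsing
end
end

section
/- Fix an integer L ≥ 1, 0 ≤ q < 1 and α, β, γ, δ ≥ 0. Let A be a unital associative ℝ-algebra and let 𝐃, 𝐄 ∈ A satisfy 𝐃𝐄 − q·𝐄𝐃 = 𝐃 + 𝐄. Let φ : A → ℝ be ℝ-linear with φ((𝐃+𝐄)^L) ≠ 0, and suppose that φ((α𝐄 − γ𝐃)·X) = φ(X) and φ(X·(β𝐃 − δ𝐄)) = φ(X) for every X ∈ A which is a product of at most L−1 factors each equal to 𝐃 or 𝐄 (the empty product being 1). Then the function P : {0,1}^L → ℝ defined by P(τ₁,…,τ_L) = φ(∏_{j=1}^{L}(τ_j·𝐃 + (1−τ_j)·𝐄)) / φ((𝐃+𝐄)^L) satisfies the ASEP stationarity equations with parameters (α,β,γ,δ,q). -/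
noncomputable section

open scoped BigOperators

theorem stmt3 (L : ℕ) (hL : 0 < L) (q α β γ δ : ℝ) (hq0 : 0 ≤ q) (hq1 : q < 1)
    (hα : 0 ≤ α) (hβ : 0 ≤ β) (hγ : 0 ≤ γ) (hδ : 0 ≤ δ)
    (A : Type*) [Ring A] [Algebra ℝ A] (D E : A)
    (hDE : D * E - q • (E * D) = D + E)
    (φ : A →ₗ[ℝ] ℝ)
    (hne : φ ((D + E) ^ L) ≠ 0)
    (hW : ∀ l : List A, (∀ x ∈ l, x = D ∨ x = E) → l.length ≤ L - 1 →
      φ ((α • E - γ • D) * l.prod) = φ l.prod)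
    (hV : ∀ l : List A, (∀ x ∈ l, x = D ∨ x = E) → l.length ≤ L - 1 →
      φ (l.prod * (β • D - δ • E)) = φ l.prod) :
    ASEPStationary q α β γ δ L hL
      (fun τ : Fin L → Bool =>
        φ (List.ofFn fun j : Fin L => if τ j then D else E).prod / φ ((D + E) ^ L)) := by
  simp only [ASEPStationary]
  intro τ
  set Z := φ ((D + E) ^ L) with hZ
  set l : List A := List.ofFn (fun j : Fin L => if τ j then D else E) with hl
  have hlen : l.length = L := by simp [hl]
  have hmem : ∀ x ∈ l, x = D ∨ x = E := by
    intro x hx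
    rw [hl, List.mem_ofFn] at hx
    obtain ⟨j, hj⟩ := hx
    cases hτ : τ j <;> simp [hτ] at hj <;> [right; left] <;> exact hj.symm
  have hget : ∀ (k : ℕ) (h : k < L), l[k]'(by omega) = if τ ⟨k, h⟩ then D else E := by
    intro k h
    simp [hl, List.getElem_ofFn]
  set T : ℕ → A := fun k => (l.take k).prod with hT
  set S : ℕ → A := fun k => (l.drop k).prod with hS
  set c : ℕ → ℝ := fun k => φ (T k * S (k + 1)) with hc
  set b : ℕ → Bool := fun k => if h : k < L then τ ⟨k, h⟩ else false with hb
  set g : ℕ → ℝ := fun k => (2 * indic (b k) - 1) * c k with hg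
  have hSd : ∀ (k : ℕ) (h : k < L), S k = (if τ ⟨k, h⟩ then D else E) * S (k + 1) := by
    intro k h
    rw [hS]
    simp only []
    rw [List.drop_eq_getElem_cons (by omega : k < l.length), List.prod_cons, hget k h]
  have hTs : ∀ (k : ℕ) (h : k < L), T (k + 1) = T k * (if τ ⟨k, h⟩ then D else E) := by
    intro k h
    rw [hT]
    simp only []
    rw [List.prod_take_succ _ _ (by omega : k < l.length), hget k h]
  have hupd : ∀ (σ : Fin L → Bool) (i : Fin L) (x : Bool),
      List.ofFn (fun j => if Function.update σ i x j then D else E) =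
        (List.ofFn fun j => if σ j then D else E).set i (if x then D else E) := by
    intro σ i x
    apply List.ext_getElem
    · simp
    · intro n h1 h2
      simp only [List.getElem_ofFn, List.getElem_set]
      rcases eq_or_ne (i : ℕ) n with h | h
      · have he : (⟨n, by simpa using h1⟩ : Fin L) = i := by
          apply Fin.ext; simp [h]
        rw [if_pos h, he, Function.update_self]
      · have he : (⟨n, by simpa using h1⟩ : Fin L) ≠ i := by
          intro hcon; exact h (by simpa using congrArg Fin.val hcon.symm)
        rw [if_neg h, Function.update_of_ne he]
  have hP1 : ∀ (n : ℕ) (h : n < L) (x : Bool),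
      (List.ofFn (fun j => if Function.update τ ⟨n, h⟩ x j then D else E)).prod
        = T n * ((if x then D else E) * S (n + 1)) := by
    intro n h x
    rw [hupd, ← hl, List.prod_set]
    rw [if_pos (show (⟨n, h⟩ : Fin L).val < l.length by rw [hlen]; exact h), mul_assoc]
  have hP2 : ∀ (n : ℕ) (h1 : n < L) (h2 : n + 1 < L) (x y : Bool),
      (List.ofFn (fun j =>
          if Function.update (Function.update τ ⟨n, h1⟩ x) ⟨n + 1, h2⟩ y j then D else E)).prod
        = T n * ((if x then D else E) * ((if y then D else E) * S (n + 2))) := by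
    intro n h1 h2 x y
    have e1 : (List.ofFn fun j =>
          if Function.update (Function.update τ ⟨n, h1⟩ x) ⟨n + 1, h2⟩ y j then D else E)
        = (l.set n (if x then D else E)).set (n + 1) (if y then D else E) := by
      rw [hupd, hupd, ← hl]
    have cc : n < (List.take (n + 1) l).length := by
      rw [List.length_take, hlen]; omega
    have e3 : ((l.take (n + 1)).set n (if x then D else E)).prod = T n * (if x then D else E) := by
      rw [List.prod_set, List.take_take, min_eq_left (by omega), if_pos cc,
        List.drop_eq_nil_of_le (by rw [List.length_take]; omega), List.prod_nil, mul_one]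
    have cd : n + 1 < (l.set n (if x then D else E)).length := by
      rw [List.length_set, hlen]; omega
    rw [e1, List.prod_set, List.drop_set_of_lt (by omega : n < n + 2), List.take_set, e3,
      if_pos cd, mul_assoc, mul_assoc]
  -- left boundary
  have hT0 : T 0 = 1 := by simp [hT]
  have hb0 : b 0 = τ ⟨0, hL⟩ := by simp [hb, hL]
  have hkeyL : α * φ (E * S 1) - γ * φ (D * S 1) = c 0 := by
    have h1 : φ ((α • E - γ • D) * S 1) = φ (S 1) :=
      hW (l.drop 1) (fun x hx => hmem x (List.drop_subset _ _ hx))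
        (by rw [List.length_drop, hlen])
    have h2 : (α • E - γ • D) * S 1 = α • (E * S 1) - γ • (D * S 1) := by
      rw [sub_mul, smul_mul_assoc, smul_mul_assoc]
    rw [h2, map_sub, map_smul, map_smul, smul_eq_mul, smul_eq_mul] at h1
    rw [h1, hc]
    simp only [hT0, one_mul]
  have hleft : (indic (τ ⟨0, hL⟩) - indic (!τ ⟨0, hL⟩)) *
      (α * (φ (List.ofFn fun j => if Function.update τ ⟨0, hL⟩ false j then D else E).prod / Z)
        - γ * (φ (List.ofFn fun j => if Function.update τ ⟨0, hL⟩ true j then D else E).prod / Z))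
      = g 0 / Z := by
    rw [hP1 0 hL false, hP1 0 hL true, hT0, one_mul, one_mul]
    simp only [if_true, if_false, hg, hb0]
    cases h0 : τ ⟨0, hL⟩ <;> simp only [h0, indic, Bool.not_false, Bool.not_true,
      if_true, if_false] <;> rw [← hkeyL] <;> simp <;> ring
  -- right boundary
  have hL1 : L - 1 < L := Nat.sub_lt hL Nat.one_pos
  have hbL : b (L - 1) = τ ⟨L - 1, hL1⟩ := by simp [hb, hL1]
  have hSL : S (L - 1 + 1) = 1 := by
    have : L - 1 + 1 = L := by omega
    rw [this, hS]
    simp only []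
    rw [List.drop_eq_nil_of_le (le_of_eq hlen), List.prod_nil]
  have hkeyR : β * φ (T (L - 1) * D) - δ * φ (T (L - 1) * E) = c (L - 1) := by
    have h1 : φ ((l.take (L - 1)).prod * (β • D - δ • E)) = φ (l.take (L - 1)).prod :=
      hV (l.take (L - 1)) (fun x hx => hmem x (List.take_subset _ _ hx))
        (by rw [List.length_take, hlen]; omega)
    have h2 : (l.take (L - 1)).prod * (β • D - δ • E)
        = β • ((l.take (L - 1)).prod * D) - δ • ((l.take (L - 1)).prod * E) := by
      rw [mul_sub, mul_smul_comm, mul_smul_comm]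
    rw [h2, map_sub, map_smul, map_smul, smul_eq_mul, smul_eq_mul] at h1
    have hTd : T (L - 1) = (l.take (L - 1)).prod := rfl
    rw [hTd, h1, hc]
    simp only [hSL, mul_one]
    rfl
  have hright : (indic (!τ ⟨L - 1, Nat.sub_lt hL Nat.one_pos⟩)
        - indic (τ ⟨L - 1, Nat.sub_lt hL Nat.one_pos⟩)) *
      (β * (φ (List.ofFn fun j =>
            if Function.update τ ⟨L - 1, Nat.sub_lt hL Nat.one_pos⟩ true j then D else E).prod / Z)
        - δ * (φ (List.ofFn fun j =>
            if Function.update τ ⟨L - 1, Nat.sub_lt hL Nat.one_pos⟩ false j then D else E).prod / Z))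
      = -(g (L - 1) / Z) := by
    rw [hP1 (L - 1) hL1 true, hP1 (L - 1) hL1 false, hSL]
    simp only [if_true, if_false, mul_one, hg, hbL]
    cases h0 : τ ⟨L - 1, hL1⟩ <;> simp only [h0, indic, Bool.not_false, Bool.not_true,
      if_true, if_false] <;> rw [← hkeyR] <;> simp <;> ring
  -- bulk
  have alg : ∀ Tn Sn : A, Tn * (D * (E * Sn)) - q • (Tn * (E * (D * Sn)))
      = Tn * (D * Sn) + Tn * (E * Sn) := by
    intro Tn Sn
    have step : Tn * (D * (E * Sn)) - q • (Tn * (E * (D * Sn)))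
        = Tn * ((D * E - q • (E * D)) * Sn) := by
      rw [sub_mul, smul_mul_assoc, mul_sub, mul_smul_comm]
      simp [mul_assoc]
    rw [step, hDE, add_mul, mul_add]
  have bulk : ∀ (n : ℕ) (hn1 : n < L) (hn2 : n + 1 < L),
      (indic (τ ⟨n + 1, hn2⟩) - indic (τ ⟨n, hn1⟩)) *
        (φ (List.ofFn fun j =>
              if Function.update (Function.update τ ⟨n, hn1⟩ true) ⟨n + 1, hn2⟩ false j
              then D else E).prod / Z
          - q * (φ (List.ofFn fun j =>
              if Function.update (Function.update τ ⟨n, hn1⟩ false) ⟨n + 1, hn2⟩ true j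
              then D else E).prod / Z))
      = (g (n + 1) - g n) / Z := by
    intro n hn1 hn2
    rw [hP2 n hn1 hn2 true false, hP2 n hn1 hn2 false true]
    have hbn : b n = τ ⟨n, hn1⟩ := by simp [hb, hn1]
    have hbn1 : b (n + 1) = τ ⟨n + 1, hn2⟩ := by simp [hb, hn2]
    have cn : c n = φ (T n * ((if τ ⟨n + 1, hn2⟩ then D else E) * S (n + 2))) := by
      rw [hc]
      simp only []
      rw [hSd (n + 1) hn2]
    have cn1 : c (n + 1) = φ (T n * ((if τ ⟨n, hn1⟩ then D else E) * S (n + 2))) := by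
      rw [hc]
      simp only []
      rw [hTs n hn1, mul_assoc]
    have key : φ (T n * (D * (E * S (n + 2)))) - q * φ (T n * (E * (D * S (n + 2))))
        = φ (T n * (D * S (n + 2))) + φ (T n * (E * S (n + 2))) := by
      have := congrArg φ (alg (T n) (S (n + 2)))
      rwa [map_sub, map_smul, smul_eq_mul, map_add] at this
    simp only [hg, hbn, hbn1, cn, cn1]
    cases hx : τ ⟨n, hn1⟩ <;> cases hy : τ ⟨n + 1, hn2⟩ <;>
      simp only [hx, hy, indic, Bool.false_eq_true, eq_self_iff_true, if_true, if_false] <;>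
      first
        | ring1
        | linear_combination key / Z
        | linear_combination -key / Z

  -- assemble
  have hsum : (∑ k : Fin (L - 1), (g ((k : ℕ) + 1) - g (k : ℕ)) / Z)
      = (g (L - 1) - g 0) / Z := by
    rw [Fin.sum_univ_eq_sum_range (fun n => (g (n + 1) - g n) / Z) (L - 1),
      ← Finset.sum_div, Finset.sum_range_sub]
  rw [hleft, hright,
    Finset.sum_congr rfl (fun (k : Fin (L - 1)) _ =>
      bulk (k : ℕ) (Nat.lt_of_succ_lt (Nat.add_lt_of_lt_sub k.isLt))
        (Nat.add_lt_of_lt_sub k.isLt)),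
    hsum]
  ring

end
end

section
/- Let 0 < q < 1, let α, β, γ, δ > 0 and let N ∈ ℕ satisfy α·β = q^N·γ·δ. Let A be a unital associative ℝ-algebra and let 𝐃, 𝐄 ∈ A satisfy 𝐃𝐄 − q·𝐄𝐃 = 𝐃 + 𝐄. Let φ : A → ℝ be ℝ-linear with φ(1) = 1 and with φ((α𝐄 − γ𝐃)·X) = φ(X) and φ(X·(β𝐃 − δ𝐄)) = φ(X) for every X which is a product of at most N−1 factors each equal to 𝐃 or 𝐄 (the empty product being 1). Then for every integer L with 0 ≤ L ≤ N: (−1)^L · φ((𝐄+𝐃)^L) > 0. -/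
noncomputable section



namespace Stmt6Aux

/-! ### Scalar lemmas -/

def rr (q : ℝ) (N : ℕ) (k : ℕ) : ℝ :=
  ((1 - q) * q ^ N * (1 - q ^ k)) / ((q - q ^ N) * (q ^ k - q ^ N))

lemma rr_zero (q : ℝ) (N : ℕ) : rr q N 0 = 0 := by simp [rr]

variable {q : ℝ} {N : ℕ}

lemma qpow_lt (hq0 : 0 < q) (hq1 : q < 1) {m n : ℕ} (h : m < n) : q ^ n < q ^ m :=
  pow_lt_pow_right_of_lt_one₀ hq0 hq1 h

lemma den_pos (hq0 : 0 < q) (hq1 : q < 1) (hN2 : 2 ≤ N) {k : ℕ} (hk : k < N) :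
    0 < (q - q ^ N) * (q ^ k - q ^ N) := by
  have h1 : q ^ N < q ^ 1 := qpow_lt hq0 hq1 (by omega)
  have h2 : q ^ N < q ^ k := qpow_lt hq0 hq1 hk
  rw [pow_one] at h1
  exact mul_pos (by linarith) (by linarith)

lemma rr_nonneg (hq0 : 0 < q) (hq1 : q < 1) (hN2 : 2 ≤ N) {k : ℕ} (hk : k < N) :
    0 ≤ rr q N k := by
  apply div_nonneg
  · exact mul_nonneg (mul_nonneg (by linarith) (pow_pos hq0 N).le)
      (by have := pow_le_one₀ hq0.le hq1.le (n := k); linarith)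
  · exact (den_pos hq0 hq1 hN2 hk).le

lemma rr_lt_one (hq0 : 0 < q) (hq1 : q < 1) {k : ℕ} (hk : k + 2 ≤ N) : rr q N k < 1 := by
  have hN2 : 2 ≤ N := by omega
  have hd := den_pos hq0 hq1 hN2 (show k < N by omega)
  rw [show rr q N k = ((1 - q) * q ^ N * (1 - q ^ k)) / ((q - q ^ N) * (q ^ k - q ^ N)) from rfl, div_lt_one hd]
  have key : (q - q ^ N) * (q ^ k - q ^ N) - (1 - q) * q ^ N * (1 - q ^ k)
      = (1 - q ^ N) * (q * q ^ k - q ^ N) := by ring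
  have h1 : q ^ N < 1 := pow_lt_one₀ hq0.le hq1 (by omega)
  have h2 : q ^ N < q * q ^ k := by
    have h3 : q ^ N < q ^ (k + 1) := qpow_lt hq0 hq1 (by omega)
    calc q ^ N < q ^ (k+1) := h3
    _ = q * q ^ k := by ring
  nlinarith

lemma rr_rec (hq0 : 0 < q) (hq1 : q < 1) {k : ℕ} (hk : k + 2 ≤ N) :
    rr q N (k + 1) * (1 - rr q N k)
      = (1 - q ^ (N + 1)) / (q - q ^ N) * rr q N k
        + (1 - q) ^ 2 * q ^ N / (q - q ^ N) ^ 2 := by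
  have h1 : q ^ N < q := by
    have := qpow_lt hq0 hq1 (show 1 < N by omega); rwa [pow_one] at this
  have h2 : q ^ N < q ^ k := qpow_lt hq0 hq1 (by omega)
  have h3 : q ^ N < q ^ (k + 1) := qpow_lt hq0 hq1 (by omega)
  have e1 : q - q ^ N ≠ 0 := by linarith
  have e2 : q ^ k - q ^ N ≠ 0 := by linarith
  have e3 : q ^ (k + 1) - q ^ N ≠ 0 := by linarith
  simp only [rr]
  field_simp
  ring

/-! ### Cones of sorted monomials -/

variable {A : Type*} [Ring A] [Algebra ℝ A]

def cone1 (W V : A) (m : ℕ) : AddSubmonoid A :=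
  AddSubmonoid.closure
    {x | ∃ i j : ℕ, ∃ t : ℝ, 0 ≤ t ∧ i + j ≤ m + 1 ∧ (1 ≤ i ∨ j ≤ m) ∧ x = t • (W ^ i * V ^ j)}

def cone0 (W V : A) (m : ℕ) : AddSubmonoid A :=
  AddSubmonoid.closure
    {x | ∃ i j : ℕ, ∃ t : ℝ, 0 ≤ t ∧ i + j ≤ m ∧ x = t • (W ^ i * V ^ j)}

variable {W V : A} {m m' i j : ℕ} {t : ℝ} {x : A}

lemma mem_cone1 (h0 : 0 ≤ t) (h1 : i + j ≤ m + 1) (h2 : 1 ≤ i ∨ j ≤ m) :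
    t • (W ^ i * V ^ j) ∈ cone1 W V m :=
  AddSubmonoid.subset_closure ⟨i, j, t, h0, h1, h2, rfl⟩

lemma mem_cone0 (h0 : 0 ≤ t) (h1 : i + j ≤ m) :
    t • (W ^ i * V ^ j) ∈ cone0 W V m :=
  AddSubmonoid.subset_closure ⟨i, j, t, h0, h1, rfl⟩

lemma cone1_smul (ht : 0 ≤ t) (hx : x ∈ cone1 W V m) : t • x ∈ cone1 W V m := by
  refine AddSubmonoid.closure_induction ?_ ?_ ?_ hx
  · rintro y ⟨i, j, s, hs, h1, h2, rfl⟩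
    rw [smul_smul]
    exact mem_cone1 (mul_nonneg ht hs) h1 h2
  · rw [smul_zero]; exact zero_mem _
  · intro y z _ _ hy hz
    rw [smul_add]; exact add_mem hy hz

lemma cone0_smul (ht : 0 ≤ t) (hx : x ∈ cone0 W V m) : t • x ∈ cone0 W V m := by
  refine AddSubmonoid.closure_induction ?_ ?_ ?_ hx
  · rintro y ⟨i, j, s, hs, h1, rfl⟩
    rw [smul_smul]
    exact mem_cone0 (mul_nonneg ht hs) h1
  · rw [smul_zero]; exact zero_mem _
  · intro y z _ _ hy hz
    rw [smul_add]; exact add_mem hy hz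

lemma cone1_mono (h : m ≤ m') (hx : x ∈ cone1 W V m) : x ∈ cone1 W V m' := by
  refine AddSubmonoid.closure_induction ?_ ?_ ?_ hx
  · rintro y ⟨i, j, s, hs, h1, h2, rfl⟩
    exact mem_cone1 hs (by omega) (by omega)
  · exact zero_mem _
  · intro y z _ _ hy hz; exact add_mem hy hz

lemma cone0_mono (h : m ≤ m') (hx : x ∈ cone0 W V m) : x ∈ cone0 W V m' := by
  refine AddSubmonoid.closure_induction ?_ ?_ ?_ hx
  · rintro y ⟨i, j, s, hs, h1, rfl⟩
    exact mem_cone0 hs (by omega)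
  · exact zero_mem _
  · intro y z _ _ hy hz; exact add_mem hy hz

lemma cone1_le_cone0 (hx : x ∈ cone1 W V m) : x ∈ cone0 W V (m + 1) := by
  refine AddSubmonoid.closure_induction ?_ ?_ ?_ hx
  · rintro y ⟨i, j, s, hs, h1, h2, rfl⟩
    exact mem_cone0 hs (by omega)
  · exact zero_mem _
  · intro y z _ _ hy hz; exact add_mem hy hz

lemma cone1_mulV (hx : x ∈ cone1 W V m) : x * V ∈ cone1 W V (m + 1) := by
  refine AddSubmonoid.closure_induction ?_ ?_ ?_ hx
  · rintro y ⟨i, j, s, hs, h1, h2, rfl⟩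
    have e : (s • (W ^ i * V ^ j)) * V = s • (W ^ i * V ^ (j + 1)) := by
      rw [smul_mul_assoc, mul_assoc, ← pow_succ]
    rw [e]
    exact mem_cone1 hs (by omega) (by omega)
  · rw [zero_mul]; exact zero_mem _
  · intro y z _ _ hy hz
    rw [add_mul]; exact add_mem hy hz

lemma cone0_mulV (hx : x ∈ cone0 W V m) : x * V ∈ cone0 W V (m + 1) := by
  refine AddSubmonoid.closure_induction ?_ ?_ ?_ hx
  · rintro y ⟨i, j, s, hs, h1, rfl⟩
    have e : (s • (W ^ i * V ^ j)) * V = s • (W ^ i * V ^ (j + 1)) := by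
      rw [smul_mul_assoc, mul_assoc, ← pow_succ]
    rw [e]
    exact mem_cone0 hs (by omega)
  · rw [zero_mul]; exact zero_mem _
  · intro y z _ _ hy hz
    rw [add_mul]; exact add_mem hy hz

lemma cone1_Wpow (hx : x ∈ cone1 W V j) (hij : i + j ≤ m) : W ^ i * x ∈ cone1 W V m := by
  refine AddSubmonoid.closure_induction ?_ ?_ ?_ hx
  · rintro y ⟨i', j', s, hs, h1, h2, rfl⟩
    have e : W ^ i * (s • (W ^ i' * V ^ j')) = s • (W ^ (i + i') * V ^ j') := by
      rw [mul_smul_comm, ← mul_assoc, ← pow_add]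
    rw [e]
    exact mem_cone1 hs (by omega) (by omega)
  · rw [mul_zero]; exact zero_mem _
  · intro y z _ _ hy hz
    rw [mul_add]; exact add_mem hy hz

/-! ### Span of words -/

def wrd (D E : A) (m : ℕ) : Submodule ℝ A :=
  Submodule.span ℝ {x | ∃ l : List A, (∀ y ∈ l, y = D ∨ y = E) ∧ l.length ≤ m ∧ x = l.prod}

variable {D E : A}

lemma one_mem_wrd : (1 : A) ∈ wrd D E m :=
  Submodule.subset_span ⟨[], by simp, by simp, by simp⟩

lemma wrd_mono (h : m ≤ m') (hx : x ∈ wrd D E m) : x ∈ wrd D E m' := by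
  refine Submodule.span_induction ?_ ?_ ?_ ?_ hx
  · rintro y ⟨l, hl, hlen, rfl⟩
    exact Submodule.subset_span ⟨l, hl, by omega, rfl⟩
  · exact zero_mem _
  · intro y z _ _ hy hz; exact add_mem hy hz
  · intro a y _ hy; exact Submodule.smul_mem _ _ hy

lemma wrd_mul_left_D (hx : x ∈ wrd D E m) : D * x ∈ wrd D E (m + 1) := by
  refine Submodule.span_induction ?_ ?_ ?_ ?_ hx
  · rintro y ⟨l, hl, hlen, rfl⟩
    refine Submodule.subset_span ⟨D :: l, ?_, by simp; omega, (List.prod_cons).symm⟩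
    intro z hz
    rcases List.mem_cons.mp hz with h | h
    · exact Or.inl h
    · exact hl z h
  · rw [mul_zero]; exact zero_mem _
  · intro y z _ _ hy hz; rw [mul_add]; exact add_mem hy hz
  · intro a y _ hy; rw [mul_smul_comm]; exact Submodule.smul_mem _ _ hy

lemma wrd_mul_left_E (hx : x ∈ wrd D E m) : E * x ∈ wrd D E (m + 1) := by
  refine Submodule.span_induction ?_ ?_ ?_ ?_ hx
  · rintro y ⟨l, hl, hlen, rfl⟩
    refine Submodule.subset_span ⟨E :: l, ?_, by simp; omega, (List.prod_cons).symm⟩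
    intro z hz
    rcases List.mem_cons.mp hz with h | h
    · exact Or.inr h
    · exact hl z h
  · rw [mul_zero]; exact zero_mem _
  · intro y z _ _ hy hz; rw [mul_add]; exact add_mem hy hz
  · intro a y _ hy; rw [mul_smul_comm]; exact Submodule.smul_mem _ _ hy

lemma wrd_mul_right_D (hx : x ∈ wrd D E m) : x * D ∈ wrd D E (m + 1) := by
  refine Submodule.span_induction ?_ ?_ ?_ ?_ hx
  · rintro y ⟨l, hl, hlen, rfl⟩
    refine Submodule.subset_span ⟨l ++ [D], ?_, by simp; omega, by simp⟩
    intro z hz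
    rcases List.mem_append.mp hz with h | h
    · exact hl z h
    · simp at h; exact Or.inl h
  · rw [zero_mul]; exact zero_mem _
  · intro y z _ _ hy hz; rw [add_mul]; exact add_mem hy hz
  · intro a y _ hy; rw [smul_mul_assoc]; exact Submodule.smul_mem _ _ hy

lemma wrd_mul_right_E (hx : x ∈ wrd D E m) : x * E ∈ wrd D E (m + 1) := by
  refine Submodule.span_induction ?_ ?_ ?_ ?_ hx
  · rintro y ⟨l, hl, hlen, rfl⟩
    refine Submodule.subset_span ⟨l ++ [E], ?_, by simp; omega, by simp⟩
    intro z hz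
    rcases List.mem_append.mp hz with h | h
    · exact hl z h
    · simp at h; exact Or.inr h
  · rw [zero_mul]; exact zero_mem _
  · intro y z _ _ hy hz; rw [add_mul]; exact add_mem hy hz
  · intro a y _ hy; rw [smul_mul_assoc]; exact Submodule.smul_mem _ _ hy

lemma wrd_W_mul (a b : ℝ) (hx : x ∈ wrd D E m) : (a • E - b • D) * x ∈ wrd D E (m + 1) := by
  rw [sub_mul, smul_mul_assoc, smul_mul_assoc]
  exact sub_mem (Submodule.smul_mem _ _ (wrd_mul_left_E hx))
    (Submodule.smul_mem _ _ (wrd_mul_left_D hx))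

lemma wrd_mul_V (a b : ℝ) (hx : x ∈ wrd D E m) : x * (a • D - b • E) ∈ wrd D E (m + 1) := by
  rw [mul_sub, mul_smul_comm, mul_smul_comm]
  exact sub_mem (Submodule.smul_mem _ _ (wrd_mul_right_D hx))
    (Submodule.smul_mem _ _ (wrd_mul_right_E hx))

end Stmt6Aux



set_option maxHeartbeats 4000000 in
open Stmt6Aux in
theorem stmt6 (q α β γ δ : ℝ) (N : ℕ) (hq0 : 0 < q) (hq1 : q < 1)
    (hα : 0 < α) (hβ : 0 < β) (hγ : 0 < γ) (hδ : 0 < δ)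
    (hsing : α * β = q ^ N * γ * δ)
    (A : Type*) [Ring A] [Algebra ℝ A] (D E : A)
    (hDE : D * E - q • (E * D) = D + E)
    (φ : A →ₗ[ℝ] ℝ) (hone : φ 1 = 1)
    (hW : ∀ l : List A, (∀ x ∈ l, x = D ∨ x = E) → l.length + 1 ≤ N →
      φ ((α • E - γ • D) * l.prod) = φ l.prod)
    (hV : ∀ l : List A, (∀ x ∈ l, x = D ∨ x = E) → l.length + 1 ≤ N →
      φ (l.prod * (β • D - δ • E)) = φ l.prod) :
    ∀ L : ℕ, L ≤ N → 0 < (-1 : ℝ) ^ L * φ ((E + D) ^ L) := by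
  have hα0 : α ≠ 0 := hα.ne'
  have hγ0 : γ ≠ 0 := hγ.ne'
  have hδ0 : δ ≠ 0 := hδ.ne'
  have hβeq : β = q ^ N * γ * δ / α := by field_simp; linear_combination hsing
  subst hβeq
  intro L hLN
  rcases Nat.eq_zero_or_pos L with hL0 | hL1
  · subst hL0; simp [hone]
  have hN1 : 1 ≤ N := by omega
  set β : ℝ := q ^ N * γ * δ / α with hβdef
  have hβpos : 0 < β := hβ
  have hβ0 : β ≠ 0 := hβpos.ne'
  set Wv : A := α • E - γ • D with hWvdef
  set Vv : A := β • D - δ • E with hVvdef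
  -- basic scalar facts
  have hqN1 : q ^ N < 1 := pow_lt_one₀ hq0.le hq1 (by omega)
  have hqN0 : 0 < q ^ N := pow_pos hq0 N
  have hqq : 2 ≤ N → 0 < q - q ^ N := by
    intro hN2
    have := qpow_lt hq0 hq1 (show 1 < N by omega)
    rw [pow_one] at this; linarith
  -- coefficients of the commutation identity
  set A' : ℝ := (1 - q ^ (N + 1)) / (q - q ^ N) with hA'def
  set B' : ℝ := ((1 - q) * β) / ((q - q ^ N) * γ) with hB'def
  set C' : ℝ := ((1 - q) * α) / ((q - q ^ N) * δ) with hC'def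
  set P' : ℝ := ((1 - q ^ N) * (β + δ)) / (q - q ^ N) with hP'def
  set Q' : ℝ := ((1 - q ^ N) * (α + γ)) / (q - q ^ N) with hQ'def
  set ρ : ℕ → ℝ := fun k => rr q N k / B' with hρdef
  clear_value Wv Vv
  have hqN1' : q ^ (N+1) < 1 := pow_lt_one₀ hq0.le hq1 (by omega)
  have hA'pos : 2 ≤ N → 0 < A' := fun h2 => div_pos (by linarith) (hqq h2)
  have hB'pos : 2 ≤ N → 0 < B' := fun h2 =>
    div_pos (mul_pos (by linarith) hβpos) (mul_pos (hqq h2) hγ)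
  have hC'pos : 2 ≤ N → 0 < C' := fun h2 =>
    div_pos (mul_pos (by linarith) hα) (mul_pos (hqq h2) hδ)
  have hP'pos : 2 ≤ N → 0 < P' := fun h2 =>
    div_pos (mul_pos (by linarith) (by linarith)) (hqq h2)
  have hQ'pos : 2 ≤ N → 0 < Q' := fun h2 =>
    div_pos (mul_pos (by linarith) (by linarith)) (hqq h2)
  have hρ0 : ρ 0 = 0 := by simp only [hρdef]; simp [rr_zero]
  have hρnonneg : ∀ k, k + 1 ≤ N → 0 ≤ ρ k := by
    intro k hk
    rcases Nat.eq_zero_or_pos k with h | h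
    · subst h; rw [hρ0]
    · have hN2 : 2 ≤ N := by omega
      rw [hρdef]
      exact div_nonneg (rr_nonneg hq0 hq1 hN2 (by omega)) (hB'pos hN2).le
  clear_value A' B' C' P' Q' ρ β
  -- the commutation identity
  have key : D * E = (D + E) + q • (E * D) := by rw [← hDE]; abel
  have G1 : 2 ≤ N → Vv * Wv
      = A' • (Wv * Vv) + B' • (Wv * Wv) + C' • (Vv * Vv) + P' • Wv + Q' • Vv := by
    intro hN2
    have hu : q - q ^ N ≠ 0 := (hqq hN2).ne'
    set c : ℝ := (q - q ^ N) * (γ * δ * α) with hcdef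
    have hcne : c ≠ 0 := by
      rw [hcdef]; exact mul_ne_zero hu (by positivity)
    have hcA : c * A' = (1 - q ^ (N + 1)) * (γ * δ * α) := by
      rw [hcdef, hA'def]; field_simp
    have hcB : c * B' = (1 - q) * q ^ N * γ * δ * δ := by
      rw [hcdef, hB'def, hβdef]; field_simp
    have hcC : c * C' = (1 - q) * γ * α * α := by
      rw [hcdef, hC'def]; field_simp
    have hcP : c * P' = (1 - q ^ N) * (γ * δ) * (q ^ N * γ * δ + α * δ) := by
      rw [hcdef, hP'def, hβdef]; field_simp
    have hcQ : c * Q' = (1 - q ^ N) * (γ * δ * α) * (α + γ) := by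
      rw [hcdef, hQ'def]; field_simp
    have hβc : α * β = q ^ N * γ * δ := by rw [hβdef]; field_simp
    apply smul_right_injective A hcne
    simp only [smul_add, smul_smul, hcA, hcB, hcC, hcP, hcQ]
    rw [hWvdef, hVvdef]
    simp only [sub_mul, mul_sub, smul_mul_assoc, mul_smul_comm, smul_smul, smul_sub, smul_add]
    rw [key]
    simp only [hβdef]
    match_scalars <;> (field_simp; ring)
  -- scalar recursion facts
  have hBρ : ∀ k, 2 ≤ N → B' * ρ k = rr q N k := by
    intro k hN2
    have hB'ne : B' ≠ 0 := (hB'pos hN2).ne'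
    simp only [hρdef]
    field_simp
  have hBC : 2 ≤ N → B' * C' = (1 - q) ^ 2 * q ^ N / (q - q ^ N) ^ 2 := by
    intro hN2
    have hu : q - q ^ N ≠ 0 := (hqq hN2).ne'
    rw [hB'def, hC'def, hβdef]
    field_simp
  have hρstep : ∀ k, k + 2 ≤ N → (1 - B' * ρ k)⁻¹ * (A' * ρ k + C') = ρ (k + 1) := by
    intro k hk
    have hN2 : 2 ≤ N := by omega
    have hB'ne : B' ≠ 0 := (hB'pos hN2).ne'
    have hrlt := rr_lt_one hq0 hq1 hk
    have h1 : (1 : ℝ) - B' * ρ k = 1 - rr q N k := by rw [hBρ k hN2]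
    have hne : (1:ℝ) - rr q N k ≠ 0 := by linarith
    have hrec : rr q N (k+1) * (1 - rr q N k) = A' * rr q N k + B' * C' := by
      rw [hA'def, hBC hN2]; exact rr_rec hq0 hq1 hk
    rw [h1]
    simp only [hρdef]
    rw [inv_mul_eq_div, div_eq_div_iff hne hB'ne]
    have h2 : (A' * (rr q N k / B') + C') * B' = A' * rr q N k + B' * C' := by
      field_simp
    rw [h2]
    exact hrec.symm
  -- the main structural lemma
  have main : ∀ n k, k ≤ n → k + 1 ≤ N →
      ∃ R, R ∈ cone1 Wv Vv k ∧ Vv ^ k * Wv = ρ k • Vv ^ (k + 1) + R := by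
    intro n
    induction n with
    | zero =>
      intro k hk _
      obtain rfl : k = 0 := by omega
      refine ⟨Wv, ?_, ?_⟩
      · have h := mem_cone1 (W := Wv) (V := Vv) (i := 1) (j := 0) (t := (1:ℝ)) (m := 0)
          (by norm_num) (by omega) (by omega)
        simpa using h
      · rw [hρ0]; simp
    | succ n ihn =>
      intro k hk hkN
      rcases Nat.lt_or_ge k (n+1) with hlt | hge
      · exact ihn k (by omega) hkN
      have hkeq : k = n + 1 := by omega
      subst hkeq
      have hN2 : 2 ≤ N := by omega
      obtain ⟨R, hRmem, hReq⟩ := ihn n le_rfl (by omega)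
      have auxW : ∀ x ∈ cone1 Wv Vv n, x * Wv ∈ cone1 Wv Vv (n + 1) := by
        intro x hx
        refine AddSubmonoid.closure_induction ?_ ?_ ?_ hx
        · rintro y ⟨i, j, t, ht, hij, hcond, rfl⟩
          rw [smul_mul_assoc, mul_assoc]
          rcases j with _ | jj
          · have e : Wv ^ i * (Vv ^ 0 * Wv) = Wv ^ (i+1) * Vv ^ 0 := by
              simp [pow_succ]
            rw [e]
            exact mem_cone1 ht (by omega) (by omega)
          · have hjj : jj + 1 ≤ n := by omega
            obtain ⟨Rj, hRjmem, hRjeq⟩ := ihn (jj+1) hjj (by omega)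
            rw [hRjeq, mul_add, mul_smul_comm, smul_add, smul_smul]
            refine add_mem ?_ ?_
            · exact mem_cone1 (mul_nonneg ht (hρnonneg (jj+1) (by omega))) (by omega) (by omega)
            · exact cone1_smul ht (cone1_Wpow hRjmem (by omega))
        · rw [zero_mul]; exact zero_mem _
        · intro y z _ _ hy hz; rw [add_mul]; exact add_mem hy hz
      have hG1 := G1 hN2
      have E0 : Vv ^ (n+1) * Wv = (B' * ρ n) • (Vv ^ (n+1) * Wv)
          + ((A' * ρ n + C') • Vv ^ (n+1+1)
             + (A' • (R * Vv) + B' • (R * Wv) + P' • R + (P' * ρ n + Q') • Vv ^ (n+1))) := by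
        conv_lhs => rw [pow_succ, mul_assoc, hG1]
        simp only [mul_add, mul_smul_comm, ← mul_assoc, ← pow_succ]
        rw [hReq]
        simp only [add_mul, smul_mul_assoc, smul_add, smul_smul, ← pow_succ]
        match_scalars <;> ring
      have hrlt := rr_lt_one hq0 hq1 (show n + 2 ≤ N by omega)
      have hfac : (0:ℝ) < 1 - B' * ρ n := by rw [hBρ n hN2]; linarith
      have E2 : (1 - B' * ρ n) • (Vv ^ (n+1) * Wv)
          = (A' * ρ n + C') • Vv ^ (n+1+1)
            + (A' • (R * Vv) + B' • (R * Wv) + P' • R + (P' * ρ n + Q') • Vv ^ (n+1)) := by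
        rw [sub_smul, one_smul]
        nth_rewrite 1 [E0]
        abel
      refine ⟨(1 - B' * ρ n)⁻¹ • (A' • (R * Vv) + B' • (R * Wv) + P' • R
          + (P' * ρ n + Q') • Vv ^ (n+1)), ?_, ?_⟩
      · apply cone1_smul (inv_nonneg.mpr hfac.le)
        refine add_mem (add_mem (add_mem ?_ ?_) ?_) ?_
        · exact cone1_smul (hA'pos hN2).le (cone1_mulV hRmem)
        · exact cone1_smul (hB'pos hN2).le (auxW R hRmem)
        · exact cone1_smul (hP'pos hN2).le (cone1_mono (by omega) hRmem)
        · have h := mem_cone1 (W := Wv) (V := Vv) (i := 0) (j := n+1) (m := n+1)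
            (t := P' * ρ n + Q')
            (add_nonneg (mul_nonneg (hP'pos hN2).le (hρnonneg n (by omega)))
              (hQ'pos hN2).le)
            (by omega) (by omega)
          simpa using h
      · have h2 : Vv ^ (n+1) * Wv
            = (1 - B' * ρ n)⁻¹ • ((1 - B' * ρ n) • (Vv ^ (n+1) * Wv)) := by
          rw [smul_smul, inv_mul_cancel₀ hfac.ne', one_smul]
        rw [h2, E2, smul_add, smul_smul, hρstep n (by omega)]
  -- multiplication of the full cone by Wv on the right
  have ccW : ∀ m, m + 1 ≤ N → ∀ x ∈ cone0 Wv Vv m, x * Wv ∈ cone0 Wv Vv (m + 1) := by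
    intro m hm x hx
    refine AddSubmonoid.closure_induction ?_ ?_ ?_ hx
    · rintro y ⟨i, j, t, ht, hij, rfl⟩
      rw [smul_mul_assoc, mul_assoc]
      rcases j with _ | jj
      · have e : Wv ^ i * (Vv ^ 0 * Wv) = Wv ^ (i+1) * Vv ^ 0 := by simp [pow_succ]
        rw [e]
        exact mem_cone0 ht (by omega)
      · obtain ⟨Rj, hRjmem, hRjeq⟩ := main (jj+1) (jj+1) le_rfl (by omega)
        rw [hRjeq, mul_add, mul_smul_comm, smul_add, smul_smul]
        refine add_mem ?_ ?_
        · exact mem_cone0 (mul_nonneg ht (hρnonneg (jj+1) (by omega))) (by omega)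
        · exact cone0_smul ht (cone1_le_cone0 (cone1_Wpow hRjmem (by omega)))
    · rw [zero_mul]; exact zero_mem _
    · intro y z _ _ hy hz; rw [add_mul]; exact add_mem hy hz
  -- φ on words and sorted monomials
  have phiW : ∀ m, m + 1 ≤ N → ∀ x ∈ wrd D E m, φ (Wv * x) = φ x := by
    intro m hm x hx
    refine Submodule.span_induction ?_ ?_ ?_ ?_ hx
    · rintro y ⟨l, hl, hlen, rfl⟩
      exact hW l hl (by omega)
    · simp
    · intro y z _ _ hy hz; rw [mul_add, map_add, map_add, hy, hz]
    · intro a y _ hy; rw [mul_smul_comm, map_smul, map_smul, hy]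
  have phiV : ∀ m, m + 1 ≤ N → ∀ x ∈ wrd D E m, φ (x * Vv) = φ x := by
    intro m hm x hx
    refine Submodule.span_induction ?_ ?_ ?_ ?_ hx
    · rintro y ⟨l, hl, hlen, rfl⟩
      exact hV l hl (by omega)
    · simp
    · intro y z _ _ hy hz; rw [add_mul, map_add, map_add, hy, hz]
    · intro a y _ hy; rw [smul_mul_assoc, map_smul, map_smul, hy]
  have sortedMem : ∀ i j : ℕ, Wv ^ i * Vv ^ j ∈ wrd D E (i + j) := by
    intro i
    induction i with
    | zero =>
      intro j
      induction j with
      | zero => simpa using (one_mem_wrd (D := D) (E := E) (m := 0))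
      | succ j ihj =>
        have e : Wv ^ 0 * Vv ^ (j+1) = (Wv ^ 0 * Vv ^ j) * Vv := by
          rw [pow_succ, ← mul_assoc]
        have ihj' := ihj
        rw [e]
        rw [hVvdef] at ihj' ⊢
        exact wrd_mul_V β δ ihj'
    | succ i ihi =>
      intro j
      have e : Wv ^ (i+1) * Vv ^ j = Wv * (Wv ^ i * Vv ^ j) := by
        rw [pow_succ', mul_assoc]
      rw [e, show (i+1) + j = (i+j) + 1 from by omega]
      have h3 := ihi j
      rw [hWvdef] at h3 ⊢
      exact wrd_W_mul α γ h3
  have phiSorted : ∀ i j : ℕ, i + j ≤ N → φ (Wv ^ i * Vv ^ j) = 1 := by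
    intro i
    induction i with
    | zero =>
      intro j
      induction j with
      | zero => intro _; simpa using hone
      | succ j ihj =>
        intro hj
        have e : Wv ^ 0 * Vv ^ (j+1) = (Wv ^ 0 * Vv ^ j) * Vv := by
          rw [pow_succ, ← mul_assoc]
        rw [e, phiV (0+j) (by omega) _ (sortedMem 0 j)]
        exact ihj (by omega)
    | succ i ihi =>
      intro j hj
      have e : Wv ^ (i+1) * Vv ^ j = Wv * (Wv ^ i * Vv ^ j) := by
        rw [pow_succ', mul_assoc]
      rw [e, phiW (i+j) (by omega) _ (sortedMem i j)]
      exact ihi j (by omega)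
  have phiCone : ∀ m, m ≤ N → ∀ x ∈ cone0 Wv Vv m, 0 ≤ φ x := by
    intro m hm x hx
    refine AddSubmonoid.closure_induction ?_ ?_ ?_ hx
    · rintro y ⟨i, j, t, ht, hij, rfl⟩
      rw [map_smul, smul_eq_mul, phiSorted i j (by omega), mul_one]
      exact ht
    · simp
    · intro y z _ _ hy hz; rw [map_add]; linarith
  -- base change
  have h1N : (0:ℝ) < 1 - q ^ N := by linarith
  set sa : ℝ := (β + δ) / (γ * δ * (1 - q ^ N)) with hsadef
  set sb : ℝ := (α + γ) / (γ * δ * (1 - q ^ N)) with hsbdef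
  have hsapos : 0 < sa := by
    rw [hsadef]; exact div_pos (by linarith) (by positivity)
  have hsbpos : 0 < sb := by
    rw [hsbdef]; exact div_pos (by linarith) (by positivity)
  clear_value sa sb
  have hbase : (-1 : ℝ) • (E + D) = sa • Wv + sb • Vv := by
    have h1N' : (1:ℝ) - q ^ N ≠ 0 := h1N.ne'
    rw [hWvdef, hVvdef, hsadef, hsbdef, hβdef]
    match_scalars <;> (field_simp; ring)
  -- the expansion of powers
  have asm : ∀ l : ℕ, l ≤ N → ∃ S, S ∈ cone0 Wv Vv l ∧
      (sa • Wv + sb • Vv) ^ l = (sb ^ l) • Vv ^ l + S := by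
    intro l
    induction l with
    | zero => intro _; exact ⟨0, zero_mem _, by simp⟩
    | succ l ihl =>
      intro hl
      obtain ⟨S, hS, hEq⟩ := ihl (by omega)
      obtain ⟨R, hR, hReq⟩ := main l l le_rfl (by omega)
      refine ⟨(sb ^ l * sa * ρ l) • Vv ^ (l+1)
          + ((sb ^ l * sa) • R + (sa • (S * Wv) + sb • (S * Vv))), ?_, ?_⟩
      · refine add_mem ?_ (add_mem ?_ (add_mem ?_ ?_))
        · have h := mem_cone0 (W := Wv) (V := Vv) (i := 0) (j := l+1) (m := l+1)
            (t := sb ^ l * sa * ρ l)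
            (mul_nonneg (mul_nonneg (pow_nonneg hsbpos.le l) hsapos.le)
              (hρnonneg l (by omega)))
            (by omega)
          simpa using h
        · exact cone0_smul (mul_nonneg (pow_nonneg hsbpos.le l) hsapos.le)
            (cone1_le_cone0 hR)
        · exact cone0_smul hsapos.le (ccW l (by omega) S hS)
        · exact cone0_smul hsbpos.le (cone0_mulV hS)
      · rw [pow_succ, hEq]
        simp only [add_mul, mul_add, smul_mul_assoc, mul_smul_comm, smul_add, smul_smul,
          ← pow_succ]
        rw [hReq]
        simp only [smul_add, smul_smul]
        match_scalars <;> ring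
  -- conclusion
  obtain ⟨S, hS, hEq⟩ := asm L hLN
  have hφV : φ (Vv ^ L) = 1 := by
    have := phiSorted 0 L (by omega)
    simpa using this
  have hφS : 0 ≤ φ S := phiCone L hLN S hS
  have h1 : (-1 : ℝ) ^ L * φ ((E + D) ^ L) = φ ((sa • Wv + sb • Vv) ^ L) := by
    rw [← hbase, smul_pow, map_smul, smul_eq_mul]
  rw [h1, hEq, map_add, map_smul, hφV, smul_eq_mul, mul_one]
  have hsbL := pow_pos hsbpos L
  linarith


end
end

section
/- Let 0 < q < 1, let α, β, γ, δ > 0 and let N ∈ ℕ satisfy α·β = q^N·γ·δ. Let A be a unital associative ℝ-algebra and let 𝐃, 𝐄 ∈ A satisfy 𝐃𝐄 − q·𝐄𝐃 = 𝐃 + 𝐄. Let φ : A → ℝ be ℝ-linear such that: (a) φ((α𝐄 − γ𝐃)·X) = φ(X) and φ(X·(β𝐃 − δ𝐄)) = φ(X) for every X which is a finite product of factors each equal to 𝐃 or 𝐄 (including the empty product 1); (b) φ(X) = 0 for every product of at most N such factors (including φ(1) = 0); and (c) φ(X) > 0 for every product of exactly N+1 factors each equal to 𝐃 or 𝐄.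 Then φ((𝐄+𝐃)^L) > 0 for every integer L ≥ N+1. -/
set_option linter.unusedSectionVars false

noncomputable section

namespace Stmt7Aux

variable {A : Type*} [Ring A] [Algebra ℝ A]

def Cone (D E : A) (k : ℕ) : AddSubmonoid A :=
  AddSubmonoid.closure {x | ∃ t : ℝ, 0 ≤ t ∧ ∃ l : List A,
    (∀ y ∈ l, y = D ∨ y = E) ∧ l.length ≤ k ∧ x = t • l.prod}

lemma mem_cone {D E : A} {k : ℕ} {t : ℝ} (ht : 0 ≤ t) {l : List A}
    (hl : ∀ y ∈ l, y = D ∨ y = E) (hk : l.length ≤ k) :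
    t • l.prod ∈ Cone D E k :=
  AddSubmonoid.subset_closure ⟨t, ht, l, hl, hk, rfl⟩

lemma cone_mono {D E : A} {k k' : ℕ} (h : k ≤ k') : Cone D E k ≤ Cone D E k' :=
  AddSubmonoid.closure_mono (fun x hx => by
    obtain ⟨t, ht, l, hl, hk, hx⟩ := hx
    exact ⟨t, ht, l, hl, hk.trans h, hx⟩)

lemma smul_cone {D E : A} {k : ℕ} {t : ℝ} (ht : 0 ≤ t) {x : A} (hx : x ∈ Cone D E k) :
    t • x ∈ Cone D E k := by
  induction hx using AddSubmonoid.closure_induction with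
  | mem y hy =>
    obtain ⟨c, hc, l, hl, hk, rfl⟩ := hy
    rw [smul_smul]
    exact mem_cone (mul_nonneg ht hc) hl hk
  | zero => rw [smul_zero]; exact (Cone D E k).zero_mem
  | add a b _ _ ha hb => rw [smul_add]; exact (Cone D E k).add_mem ha hb

lemma word_mul_cone {D E : A} {k : ℕ} {y : A} (hy : y = D ∨ y = E) {x : A}
    (hx : x ∈ Cone D E k) : y * x ∈ Cone D E (k + 1) := by
  induction hx using AddSubmonoid.closure_induction with
  | mem z hz =>
    obtain ⟨c, hc, l, hl, hk, rfl⟩ := hz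
    rw [mul_smul_comm, ← List.prod_cons]
    exact mem_cone hc (by intro w hw; rcases List.mem_cons.mp hw with h | h; exacts [h ▸ hy, hl w h]) (by simpa using Nat.succ_le_succ hk)
  | zero => rw [mul_zero]; exact (Cone D E (k+1)).zero_mem
  | add a b _ _ ha hb => rw [mul_add]; exact (Cone D E (k+1)).add_mem ha hb

lemma repl_word (D E : A) (a b : ℕ) :
    ∀ y ∈ List.replicate a E ++ List.replicate b D, y = D ∨ y = E := by
  intro y hy
  rcases List.mem_append.mp hy with h | h
  · exact Or.inr (List.eq_of_mem_replicate h)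
  · exact Or.inl (List.eq_of_mem_replicate h)

lemma repl_prod (D E : A) (a b : ℕ) :
    (List.replicate a E ++ List.replicate b D).prod = E ^ a * D ^ b := by
  rw [List.prod_append, List.prod_replicate, List.prod_replicate]

lemma ED_mem_cone {D E : A} {k a b : ℕ} {t : ℝ} (ht : 0 ≤ t) (hab : a + b ≤ k) :
    t • (E ^ a * D ^ b) ∈ Cone D E k := by
  have := mem_cone (t := t) ht (repl_word D E a b) (k := k) (by simpa using hab)
  rwa [repl_prod] at this


lemma ident1 {q : ℝ} (hq : 0 ≤ q) {D E : A} (hDE : D * E - q • (E * D) = D + E) :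
    ∀ b : ℕ, ∃ s ∈ Cone D E b, D ^ b * E = q ^ b • (E * D ^ b) + s := by
  have hde : D * E = (D + E) + q • (E * D) := by rw [← hDE]; abel
  intro b
  induction b with
  | zero =>
    exact ⟨0, (Cone D E 0).zero_mem, by simp⟩
  | succ b ih =>
    obtain ⟨s, hs, heq⟩ := ih
    refine ⟨q ^ b • (D ^ (b+1)) + q ^ b • (E * D ^ b) + D * s, ?_, ?_⟩
    · refine (Cone D E (b+1)).add_mem ((Cone D E (b+1)).add_mem ?_ ?_) ?_
      · have := ED_mem_cone (D := D) (E := E) (a := 0) (b := b+1) (k := b+1)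
          (pow_nonneg hq b) (by omega)
        simpa using this
      · have := ED_mem_cone (D := D) (E := E) (a := 1) (b := b) (k := b+1)
          (pow_nonneg hq b) (by omega)
        simpa using this
      · exact word_mul_cone (Or.inl rfl) hs
    · have h1 : D ^ (b+1) * E = D * (D ^ b * E) := by rw [pow_succ']; rw [mul_assoc]
      rw [h1, heq, mul_add, mul_smul_comm, ← mul_assoc, hde]
      rw [add_mul, add_mul, smul_mul_assoc, mul_assoc]
      rw [smul_add, smul_add, smul_smul, ← pow_succ']
      rw [← pow_succ]
      abel

lemma ident2 {q : ℝ} (hq : 0 ≤ q) {D E : A} (hDE : D * E - q • (E * D) = D + E) :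
    ∀ a b : ℕ, ∃ s ∈ Cone D E (a + b),
      D * (E ^ a * D ^ b) = q ^ a • (E ^ a * D ^ (b+1)) + s := by
  have hde : D * E = (D + E) + q • (E * D) := by rw [← hDE]; abel
  intro a
  induction a with
  | zero =>
    intro b
    refine ⟨0, (Cone D E (0+b)).zero_mem, ?_⟩
    simp [← pow_succ']
  | succ a ih =>
    intro b
    obtain ⟨s, hs, heq⟩ := ih b
    refine ⟨q ^ a • (E ^ a * D ^ (b+1)) + s + (1:ℝ) • (E ^ (a+1) * D ^ b) + q • (E * s),
      ?_, ?_⟩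
    · have m1 : q ^ a • (E ^ a * D ^ (b+1)) ∈ Cone D E (a+1+b) :=
        ED_mem_cone (pow_nonneg hq a) (by omega)
      have m2 : s ∈ Cone D E (a+1+b) := cone_mono (by omega) hs
      have m3 : (1:ℝ) • (E ^ (a+1) * D ^ b) ∈ Cone D E (a+1+b) :=
        ED_mem_cone zero_le_one (by omega)
      have m4 : q • (E * s) ∈ Cone D E (a+1+b) :=
        cone_mono (by omega) (smul_cone hq (word_mul_cone (Or.inr rfl) hs))
      exact add_mem (add_mem (add_mem m1 m2) m3) m4
    · have h1 : D * (E ^ (a+1) * D ^ b) = (D * E) * (E ^ a * D ^ b) := by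
        rw [pow_succ' E a, mul_assoc, ← mul_assoc D E _, ← mul_assoc]
      rw [h1, hde, add_mul, add_mul, smul_mul_assoc, mul_assoc E D _, heq]
      rw [mul_add, mul_smul_comm, ← mul_assoc E (E^a) _, ← pow_succ']
      rw [smul_add, smul_smul, one_smul, ← pow_succ']
      have h2 : E * (E ^ a * D ^ (b+1)) = E ^ (a+1) * D ^ (b+1) := by
        rw [← mul_assoc, ← pow_succ']
      rw [h2]
      abel

lemma normal_form {q : ℝ} (hq : 0 < q) {D E : A} (hDE : D * E - q • (E * D) = D + E) :
    ∀ l : List A, (∀ y ∈ l, y = D ∨ y = E) → l ≠ [] →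
      ∃ a b : ℕ, a + b = l.length ∧ ∃ c : ℝ, 0 < c ∧ ∃ s ∈ Cone D E (l.length - 1),
        l.prod = c • (E ^ a * D ^ b) + s := by
  intro l
  induction l with
  | nil => intro _ h; exact absurd rfl h
  | cons y u ih =>
    intro hl _
    have hy : y = D ∨ y = E := hl y (by simp)
    rcases List.eq_nil_or_concat u with rfl | _
    · -- u = [] : single letter
      rcases hy with h | h
      · exact ⟨0, 1, rfl, 1, one_pos, 0, (Cone D E 0).zero_mem, by simp [h]⟩
      · exact ⟨1, 0, rfl, 1, one_pos, 0, (Cone D E 0).zero_mem, by simp [h]⟩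
    · have hu : u ≠ [] := by rintro rfl; simp_all
      have hul : ∀ y ∈ u, y = D ∨ y = E := fun z hz => hl z (List.mem_cons_of_mem _ hz)
      obtain ⟨a, b, hab, c, hc, s, hs, heq⟩ := ih hul hu
      have hu1 : 1 ≤ u.length := List.length_pos_iff.mpr hu
      have hlen : (y :: u).length - 1 = u.length := by simp
      rcases hy with h | h
      · -- y = D
        obtain ⟨s₂, hs₂, heq₂⟩ := ident2 hq.le hDE a b
        refine ⟨a, b+1, by simp only [List.length_cons]; omega, c * q ^ a, by positivity, c • s₂ + D * s, ?_, ?_⟩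
        · rw [hlen]
          refine (Cone D E _).add_mem ?_ ?_
          · exact smul_cone hc.le (cone_mono (by omega) hs₂)
          · have := word_mul_cone (D := D) (E := E) (Or.inl rfl) hs
            exact cone_mono (by omega) this
        · rw [List.prod_cons, h, heq, mul_add, mul_smul_comm, heq₂, smul_add, smul_smul]
          abel
      · -- y = E
        refine ⟨a+1, b, by simp only [List.length_cons]; omega, c, hc, E * s, ?_, ?_⟩
        · rw [hlen]
          have := word_mul_cone (D := D) (E := E) (Or.inr rfl) hs
          exact cone_mono (by omega) this
        · rw [List.prod_cons, h, heq, mul_add, mul_smul_comm, ← mul_assoc, ← pow_succ']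

lemma phi_cone {D E : A} {k : ℕ} (φ : A →ₗ[ℝ] ℝ)
    (h : ∀ l : List A, (∀ y ∈ l, y = D ∨ y = E) → l.length ≤ k → 0 ≤ φ l.prod)
    {x : A} (hx : x ∈ Cone D E k) : 0 ≤ φ x := by
  induction hx using AddSubmonoid.closure_induction with
  | mem z hz =>
    obtain ⟨c, hc, l, hl, hk, rfl⟩ := hz
    rw [map_smul, smul_eq_mul]
    exact mul_nonneg hc (h l hl hk)
  | zero => simp
  | add a b _ _ ha hb => rw [map_add]; exact add_nonneg ha hb

end Stmt7Aux
end
noncomputable section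

set_option maxHeartbeats 1000000 in
theorem stmt7 (q α β γ δ : ℝ) (N : ℕ) (hq0 : 0 < q) (hq1 : q < 1)
    (hα : 0 < α) (hβ : 0 < β) (hγ : 0 < γ) (hδ : 0 < δ)
    (hsing : α * β = q ^ N * γ * δ)
    (A : Type*) [Ring A] [Algebra ℝ A] (D E : A)
    (hDE : D * E - q • (E * D) = D + E)
    (φ : A →ₗ[ℝ] ℝ)
    (hW : ∀ l : List A, (∀ x ∈ l, x = D ∨ x = E) →
      φ ((α • E - γ • D) * l.prod) = φ l.prod)
    (hV : ∀ l : List A, (∀ x ∈ l, x = D ∨ x = E) →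
      φ (l.prod * (β • D - δ • E)) = φ l.prod)
    (hzero : ∀ l : List A, (∀ x ∈ l, x = D ∨ x = E) → l.length ≤ N → φ l.prod = 0)
    (hpos : ∀ l : List A, (∀ x ∈ l, x = D ∨ x = E) → l.length = N + 1 → 0 < φ l.prod) :
    ∀ L : ℕ, N + 1 ≤ L → 0 < φ ((E + D) ^ L) := by
  classical
  have hW' : ∀ l : List A, (∀ x ∈ l, x = D ∨ x = E) →
      α * φ (E * l.prod) - γ * φ (D * l.prod) = φ l.prod := by
    intro l hl
    have h := hW l hl
    rwa [sub_mul, smul_mul_assoc, smul_mul_assoc, map_sub, map_smul, map_smul,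
      smul_eq_mul, smul_eq_mul] at h
  have hV' : ∀ l : List A, (∀ x ∈ l, x = D ∨ x = E) →
      β * φ (l.prod * D) - δ * φ (l.prod * E) = φ l.prod := by
    intro l hl
    have h := hV l hl
    rwa [mul_sub, mul_smul_comm, mul_smul_comm, map_sub, map_smul, map_smul,
      smul_eq_mul, smul_eq_mul] at h
  -- main positivity for words
  have key : ∀ L : ℕ, ∀ l : List A, (∀ x ∈ l, x = D ∨ x = E) → l.length = L →
      N + 1 ≤ L → 0 < φ l.prod := by
    intro L
    induction L using Nat.strong_induction_on with
    | _ L IH =>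
    intro l hl hlen hNL
    rcases eq_or_lt_of_le hNL with hLe | hLt
    · exact hpos l hl (hlen.trans hLe.symm)
    · obtain ⟨K, rfl⟩ : ∃ K, L = K + 1 := ⟨L - 1, by omega⟩
      have hNK : N + 1 ≤ K := by omega
      have Hge : ∀ m : List A, (∀ x ∈ m, x = D ∨ x = E) → m.length ≤ K → 0 ≤ φ m.prod := by
        intro m hm hmlen
        rcases le_or_gt m.length N with h | h
        · exact le_of_eq (hzero m hm h).symm
        · exact le_of_lt (IH m.length (by omega) m hm rfl h)
      have Hcone : ∀ x ∈ Stmt7Aux.Cone D E K, 0 ≤ φ x :=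
        fun x hx => Stmt7Aux.phi_cone φ Hge hx
      have wordK : ∀ x ∈ List.replicate K D, x = D ∨ x = E :=
        fun x hx => Or.inl (List.eq_of_mem_replicate hx)
      have hDK : 0 < φ (D ^ K) := by
        have := IH K (by omega) (List.replicate K D) wordK (by simp) hNK
        rwa [List.prod_replicate] at this
      -- Step 1 base : φ (D ^ (K+1)) > 0
      have base : 0 < φ (D ^ (K + 1)) := by
        have e1 : β * φ (D ^ K * D) - δ * φ (D ^ K * E) = φ (D ^ K) := by
          have := hV' (List.replicate K D) wordK
          rwa [List.prod_replicate] at this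
        obtain ⟨s, hs, hseq⟩ := Stmt7Aux.ident1 hq0.le hDE K
        have e2 : φ (D ^ K * E) = q ^ K * φ (E * D ^ K) + φ s := by
          rw [hseq, map_add, map_smul, smul_eq_mul]
        have hφs : 0 ≤ φ s := Hcone s hs
        have e3 : α * φ (E * D ^ K) - γ * φ (D * D ^ K) = φ (D ^ K) := by
          have := hW' (List.replicate K D) wordK
          rwa [List.prod_replicate] at this
        rw [← pow_succ] at e1
        rw [← pow_succ'] at e3
        have hqNK : q ^ K < q ^ N := pow_lt_pow_right_of_lt_one₀ hq0 hq1 (by omega)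
        have heq : (q ^ N - q ^ K) * (γ * δ) * φ (D ^ (K + 1)) =
            (α + δ * q ^ K) * φ (D ^ K) + α * δ * φ s := by
          linear_combination α * e1 + α * δ * e2 + δ * q ^ K * e3 - φ (D ^ (K + 1)) * hsing
        have hcpos : 0 < (q ^ N - q ^ K) * (γ * δ) :=
          mul_pos (by linarith) (mul_pos hγ hδ)
        nlinarith [heq, hcpos, mul_pos hα hDK,
          mul_pos (mul_pos hδ (pow_pos hq0 K)) hDK,
          mul_nonneg (mul_nonneg hα.le hδ.le) hφs]
      -- Step 1 general : φ (E^a * D^b) > 0 for a + b = K + 1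
      have stepA : ∀ a b : ℕ, a + b = K + 1 → 0 < φ (E ^ a * D ^ b) := by
        intro a
        induction a with
        | zero =>
          intro b hb
          have hb' : b = K + 1 := by omega
          subst hb'
          simpa using base
        | succ a ih =>
          intro b hb
          have h1 : 0 < φ (E ^ a * D ^ (b + 1)) := ih (b + 1) (by omega)
          obtain ⟨s, hs, hseq⟩ := Stmt7Aux.ident2 hq0.le hDE a b
          have hsK : s ∈ Stmt7Aux.Cone D E K :=
            Stmt7Aux.cone_mono (by omega) hs
          have h2 : 0 ≤ φ (D * (E ^ a * D ^ b)) := by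
            rw [hseq, map_add, map_smul, smul_eq_mul]
            exact add_nonneg (mul_nonneg (pow_nonneg hq0.le a) h1.le) (Hcone s hsK)
          have h3 : 0 < φ (E ^ a * D ^ b) := by
            have := IH K (by omega) (List.replicate a E ++ List.replicate b D)
              (Stmt7Aux.repl_word D E a b) (by simp; omega) hNK
            rwa [Stmt7Aux.repl_prod] at this
          have e := hW' (List.replicate a E ++ List.replicate b D) (Stmt7Aux.repl_word D E a b)
          rw [Stmt7Aux.repl_prod] at e
          have h4 : E * (E ^ a * D ^ b) = E ^ (a + 1) * D ^ b := by
            rw [← mul_assoc, ← pow_succ']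
          rw [h4] at e
          nlinarith [mul_nonneg hγ.le h2]
      -- Step 2 : general word of length K+1
      have hlne : l ≠ [] := by
        intro h; rw [h] at hlen; simp at hlen
      obtain ⟨a, b, hab, c, hc, s, hs, hseq⟩ := Stmt7Aux.normal_form hq0 hDE l hl hlne
      have hsK : s ∈ Stmt7Aux.Cone D E K := by
        have : l.length - 1 = K := by omega
        rwa [this] at hs
      rw [hseq, map_add, map_smul, smul_eq_mul]
      have := stepA a b (by omega)
      exact add_pos_of_pos_of_nonneg (mul_pos hc this) (Hcone s hsK)
  -- expand (E + D)^L
  intro L hL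
  have main : ∀ k : ℕ, ∀ l : List A, (∀ x ∈ l, x = D ∨ x = E) →
      N + 1 ≤ k + l.length → 0 < φ ((E + D) ^ k * l.prod) := by
    intro k
    induction k with
    | zero =>
      intro l hl h
      simpa using key l.length l hl rfl (by simpa using h)
    | succ k ih =>
      intro l hl h
      have hsplit : (E + D) ^ (k + 1) * l.prod =
          (E + D) ^ k * (E :: l).prod + (E + D) ^ k * (D :: l).prod := by
        rw [pow_succ, mul_assoc, List.prod_cons, List.prod_cons, add_mul, mul_add]
      rw [hsplit, map_add]
      have hE : ∀ x ∈ E :: l, x = D ∨ x = E := by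
        intro x hx; rcases List.mem_cons.mp hx with h' | h'
        exacts [Or.inr h', hl x h']
      have hD : ∀ x ∈ D :: l, x = D ∨ x = E := by
        intro x hx; rcases List.mem_cons.mp hx with h' | h'
        exacts [Or.inl h', hl x h']
      exact add_pos (ih (E :: l) hE (by simp; omega)) (ih (D :: l) hD (by simp; omega))
  have := main L [] (by simp) (by simpa using hL)
  simpa using this

end
end

section
/- Let 0 ≤ q < 1 and let ℳ be the quotient of the free ℂ-algebra on two generators 𝖾, 𝖽 by the two-sided ideal generated by 𝖽𝖾 − q·𝖾𝖽 − 1. Then the family of normal-order monomials (𝖾^m·𝖽^n)_{(m,n) ∈ ℕ×ℕ} is a ℂ-vector space basis of ℳ: it is linearly independent over ℂ and spans ℳ. Moreover, every product of L factors each equal to 𝖾 or 𝖽 lies in the linear span of {𝖾^m·𝖽^n : m + n ≤ L}. -/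
noncomputable section

open scoped BigOperators

/-- The defining relation `𝖽𝖾 - q·𝖾𝖽 = 1` (generator `0` is `𝖾`, generator `1` is `𝖽`). -/
inductive QWeylRel (q : ℝ) : FreeAlgebra ℂ (Fin 2) → FreeAlgebra ℂ (Fin 2) → Prop
  | rel : QWeylRel q
      (FreeAlgebra.ι ℂ (1 : Fin 2) * FreeAlgebra.ι ℂ (0 : Fin 2)
        - (q : ℂ) • (FreeAlgebra.ι ℂ (0 : Fin 2) * FreeAlgebra.ι ℂ (1 : Fin 2)))
      1

/-- The algebra `ℳ`: the free `ℂ`-algebra on generators `𝖾, 𝖽` modulo the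
two-sided ideal generated by `𝖽𝖾 - q·𝖾𝖽 - 1`. -/
abbrev QWeyl (q : ℝ) : Type := RingQuot (QWeylRel q)

/-- The generator `𝖾` of `ℳ`. -/
def egen (q : ℝ) : QWeyl q := RingQuot.mkAlgHom ℂ (QWeylRel q) (FreeAlgebra.ι ℂ (0 : Fin 2))

/-- The generator `𝖽` of `ℳ`. -/
def dgen (q : ℝ) : QWeyl q := RingQuot.mkAlgHom ℂ (QWeylRel q) (FreeAlgebra.ι ℂ (1 : Fin 2))

namespace QWAux

variable (q : ℝ)

/-- q-integer `[n]_q` as a complex number. -/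
def qint (n : ℕ) : ℂ := ∑ i ∈ Finset.range n, (q : ℂ) ^ i

@[simp] lemma qint_zero : qint q 0 = 0 := by simp [qint]

lemma qint_succ (n : ℕ) : qint q (n + 1) = (q : ℂ) ^ n + qint q n := by
  simp [qint, Finset.sum_range_succ, add_comm]

lemma qint_succ' (n : ℕ) : qint q (n + 1) = (q : ℂ) * qint q n + 1 := by
  simp [qint, geom_sum_succ]

lemma qint_ne_zero (hq0 : 0 ≤ q) {n : ℕ} (hn : 0 < n) : qint q n ≠ 0 := by
  have : qint q n = ((∑ i ∈ Finset.range n, q ^ i : ℝ) : ℂ) := by push_cast [qint]; ring_nf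
  rw [this]
  have hpos : 0 < ∑ i ∈ Finset.range n, q ^ i := by
    apply Finset.sum_pos' (fun i _ => pow_nonneg hq0 i)
    exact ⟨0, Finset.mem_range.mpr hn, by simp⟩
  exact_mod_cast hpos.ne'

/-- Representation space: finitely supported functions on ℕ. -/
abbrev V : Type := ℕ →₀ ℂ

/-- Raising operator. -/
def Eop : V →ₗ[ℂ] V := Finsupp.lmapDomain ℂ ℂ (· + 1)

/-- q-difference (lowering) operator. -/
def Dop : V →ₗ[ℂ] V := Finsupp.lsum ℂ fun k => qint q k • Finsupp.lsingle (k - 1)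

@[simp] lemma Eop_single (k : ℕ) (c : ℂ) :
    Eop (Finsupp.single k c) = Finsupp.single (k + 1) c := by
  simp [Eop, Finsupp.mapDomain_single]

@[simp] lemma Dop_single (k : ℕ) (c : ℂ) :
    Dop q (Finsupp.single k c) = qint q k • Finsupp.single (k - 1) c := by
  simp [Dop]

lemma rel_End : (Dop q) * Eop - (q : ℂ) • (Eop * Dop q) = (1 : Module.End ℂ V) := by
  apply Finsupp.lhom_ext
  intro k c
  cases k with
  | zero => simp [Module.End.mul_apply, qint_succ']
  | succ k =>
      simp only [LinearMap.sub_apply, LinearMap.smul_apply, Module.End.mul_apply,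
        Eop_single, Dop_single, map_smul, Eop_single, Module.End.one_apply]
      rw [Nat.add_sub_cancel, Nat.succ_sub_one]
      rw [qint_succ' q (k+1), smul_smul, ← sub_smul]
      ring_nf
      simp


/-- The representation of `QWeyl q` on `V`. -/
def rep : QWeyl q →ₐ[ℂ] Module.End ℂ V :=
  RingQuot.liftAlgHom ℂ ⟨FreeAlgebra.lift ℂ (fun i : Fin 2 => if i = 0 then Eop else Dop q),
    by
      rintro x y ⟨⟩
      simp only [map_sub, map_smul, map_mul, map_one, FreeAlgebra.lift_ι_apply]
      norm_num
      exact rel_End q⟩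

@[simp] lemma rep_egen : rep q (egen q) = Eop := by
  rw [egen, rep, RingQuot.liftAlgHom_mkAlgHom_apply]
  simp

@[simp] lemma rep_dgen : rep q (dgen q) = Dop q := by
  rw [dgen, rep, RingQuot.liftAlgHom_mkAlgHom_apply]
  simp

lemma Eop_pow_single (m k : ℕ) (c : ℂ) :
    (Eop ^ m) (Finsupp.single k c) = Finsupp.single (k + m) c := by
  induction m with
  | zero => simp
  | succ m ih => rw [pow_succ', Module.End.mul_apply, ih, Eop_single, add_assoc, add_comm m 1, add_comm 1 m]

/-- The falling q-factorial `[k]_q [k-1]_q ⋯ [k-n+1]_q`. -/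
def ffac (n k : ℕ) : ℂ := ∏ i ∈ Finset.range n, qint q (k - i)

@[simp] lemma ffac_zero (k : ℕ) : ffac q 0 k = 1 := by simp [ffac]

lemma Dop_pow_single (n k : ℕ) (c : ℂ) :
    (Dop q ^ n) (Finsupp.single k c) = ffac q n k • Finsupp.single (k - n) c := by
  induction n generalizing k with
  | zero => simp
  | succ n ih =>
      rw [pow_succ, Module.End.mul_apply, Dop_single, map_smul, ih]
      rw [smul_smul, Nat.sub_sub, add_comm 1 n]
      congr 1
      rw [ffac, ffac, Finset.prod_range_succ']
      simp only [Nat.sub_zero, Nat.sub_sub]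
      rw [mul_comm]
      congr 1
      exact Finset.prod_congr rfl (fun i _ => by rw [add_comm 1 i])

lemma rep_monomial_single (m n k : ℕ) :
    rep q (egen q ^ m * dgen q ^ n) (Finsupp.single k (1 : ℂ)) =
      ffac q n k • Finsupp.single (k - n + m) (1 : ℂ) := by
  rw [map_mul, map_pow, map_pow, rep_egen, rep_dgen, Module.End.mul_apply,
    Dop_pow_single, map_smul, Eop_pow_single]

lemma ffac_eq_zero_of_lt {n k : ℕ} (h : k < n) : ffac q n k = 0 :=
  Finset.prod_eq_zero (Finset.mem_range.mpr h) (by simp)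

lemma ffac_ne_zero (hq0 : 0 ≤ q) {n k : ℕ} (h : n ≤ k) : ffac q n k ≠ 0 := by
  rw [ffac, Finset.prod_ne_zero_iff]
  intro i hi
  exact qint_ne_zero q hq0 (Nat.sub_pos_of_lt (lt_of_lt_of_le (Finset.mem_range.mp hi) h))


lemma linind (hq0 : 0 ≤ q) :
    LinearIndependent ℂ (fun p : ℕ × ℕ => egen q ^ p.1 * dgen q ^ p.2) := by
  rw [linearIndependent_iff']
  intro s g hsum
  have key : ∀ k i : ℕ,
      (∑ p ∈ s, (if k - p.2 + p.1 = i then g p * ffac q p.2 k else 0)) = 0 := by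
    intro k i
    have h0 : (∑ p ∈ s, g p • rep q (egen q ^ p.1 * dgen q ^ p.2)) = 0 := by
      have := congrArg (rep q) hsum
      simpa [map_sum] using this
    have h1 := congrArg (fun T : Module.End ℂ V => T (Finsupp.single k (1:ℂ))) h0
    simp only [LinearMap.coe_sum, Finset.sum_apply, LinearMap.smul_apply,
      rep_monomial_single, LinearMap.zero_apply] at h1
    have h2 := congrArg (fun v : V => v i) h1
    simp only [Finsupp.finset_sum_apply, Finsupp.smul_apply, Finsupp.single_apply,
      smul_eq_mul, Finsupp.coe_zero, Pi.zero_apply, mul_ite, mul_one, mul_zero] at h2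
    exact h2
  have main : ∀ N : ℕ, ∀ p ∈ s, p.2 = N → g p = 0 := by
    intro N
    induction N using Nat.strong_induction_on with
    | _ N ih =>
      intro p hp hpN
      have hk := key N p.1
      rw [Finset.sum_eq_single p] at hk
      · rw [hpN, Nat.sub_self, zero_add, if_pos rfl] at hk
        exact (mul_eq_zero.mp hk).resolve_right (ffac_ne_zero q hq0 le_rfl)
      · intro p' hp' hne
        rcases lt_trichotomy p'.2 N with h2 | h2 | h2
        · rw [ih p'.2 h2 p' hp' rfl, zero_mul, ite_self]
        · have h4 : ¬ (N - p'.2 + p'.1 = p.1) := by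
            rw [h2, Nat.sub_self, zero_add]
            intro h5
            exact hne (Prod.ext h5 (h2.trans hpN.symm))
          rw [if_neg h4]
        · rw [ffac_eq_zero_of_lt q h2, mul_zero, ite_self]
      · intro h; exact absurd hp h
  exact fun p hp => main p.2 p hp rfl


lemma rel_quot : dgen q * egen q = (q : ℂ) • (egen q * dgen q) + 1 := by
  have h := RingQuot.mkAlgHom_rel ℂ (QWeylRel.rel (q := q))
  simp only [map_sub, map_mul, map_smul, map_one] at h
  rw [sub_eq_iff_eq_add] at h
  rw [egen, dgen, h, add_comm]

lemma dE (m : ℕ) : dgen q * egen q ^ (m + 1)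
    = (q : ℂ) ^ (m + 1) • (egen q ^ (m + 1) * dgen q) + qint q (m + 1) • egen q ^ m := by
  induction m with
  | zero => simpa [qint_succ'] using rel_quot q
  | succ m ih =>
      have h1 : dgen q * egen q ^ (m + 2) = (dgen q * egen q ^ (m + 1)) * egen q := by
        rw [mul_assoc, ← pow_succ]
      rw [h1, ih, add_mul, smul_mul_assoc, smul_mul_assoc, mul_assoc (egen q ^ (m + 1)),
        rel_quot q, mul_add, mul_one, mul_smul_comm, smul_add, smul_smul,
        ← mul_assoc (egen q ^ (m+1)), ← pow_succ, ← pow_succ, ← pow_succ,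
        qint_succ q (m + 1), add_smul, add_assoc]

/-- The span of normal-order monomials of total degree at most `L`. -/
def SpanLe (L : ℕ) : Submodule ℂ (QWeyl q) :=
  Submodule.span ℂ {x : QWeyl q | ∃ m n : ℕ, m + n ≤ L ∧ x = egen q ^ m * dgen q ^ n}

lemma mono_mem {L m n : ℕ} (h : m + n ≤ L) : egen q ^ m * dgen q ^ n ∈ SpanLe q L :=
  Submodule.subset_span ⟨m, n, h, rfl⟩

lemma egen_mul_mem {L m n : ℕ} (h : m + n ≤ L) :
    egen q * (egen q ^ m * dgen q ^ n) ∈ SpanLe q (L + 1) := by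
  rw [← mul_assoc, ← pow_succ']
  exact mono_mem q (by omega)

lemma dgen_mul_mem {L m n : ℕ} (h : m + n ≤ L) :
    dgen q * (egen q ^ m * dgen q ^ n) ∈ SpanLe q (L + 1) := by
  cases m with
  | zero =>
      rw [pow_zero, one_mul, ← pow_succ']
      have : (dgen q : QWeyl q) ^ (n+1) = egen q ^ 0 * dgen q ^ (n+1) := by rw [pow_zero, one_mul]
      rw [this]
      exact mono_mem q (by omega)
  | succ m =>
      rw [← mul_assoc, dE q m, add_mul, smul_mul_assoc, smul_mul_assoc,
        mul_assoc (egen q ^ (m+1)), ← pow_succ']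
      exact Submodule.add_mem _
        (Submodule.smul_mem _ _ (mono_mem q (by omega)))
        (Submodule.smul_mem _ _ (mono_mem q (by omega)))

lemma part3 (L : ℕ) (l : List (QWeyl q)) (h : ∀ x ∈ l, x = egen q ∨ x = dgen q)
    (hl : l.length = L) : l.prod ∈ SpanLe q L := by
  subst hl
  induction l with
  | nil =>
      have : ([] : List (QWeyl q)).prod = egen q ^ 0 * dgen q ^ 0 := by simp
      rw [this]
      exact mono_mem q le_rfl
  | cons x t ih =>
      have ht := ih (fun y hy => h y (List.mem_cons_of_mem x hy))
      rw [List.prod_cons]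
      have hmap : SpanLe q t.length ≤ Submodule.comap (LinearMap.mulLeft ℂ x)
          (SpanLe q (t.length + 1)) := by
        rw [SpanLe, Submodule.span_le]
        rintro y ⟨m, n, hmn, rfl⟩
        rcases h x (List.mem_cons_self) with hx | hx <;> subst hx
        · exact egen_mul_mem q hmn
        · exact dgen_mul_mem q hmn
      simpa [List.length_cons] using hmap ht


lemma span_top :
    Submodule.span ℂ (Set.range fun p : ℕ × ℕ => egen q ^ p.1 * dgen q ^ p.2) = ⊤ := by
  rw [eq_top_iff]
  intro x _
  have hadj : Algebra.adjoin ℂ ({egen q, dgen q} : Set (QWeyl q)) = ⊤ := by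
    have h1 := AlgHom.map_adjoin (RingQuot.mkAlgHom ℂ (QWeylRel q))
      (Set.range (FreeAlgebra.ι ℂ : Fin 2 → FreeAlgebra ℂ (Fin 2)))
    rw [FreeAlgebra.adjoin_range_ι, Algebra.map_top,
      (AlgHom.range_eq_top _).mpr (RingQuot.mkAlgHom_surjective ℂ _)] at h1
    have h2 : (RingQuot.mkAlgHom ℂ (QWeylRel q)) ''
        (Set.range (FreeAlgebra.ι ℂ : Fin 2 → FreeAlgebra ℂ (Fin 2)))
        = {egen q, dgen q} := by
      rw [← Set.range_comp]
      ext y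
      constructor
      · rintro ⟨i, rfl⟩
        fin_cases i
        · exact Or.inl rfl
        · exact Or.inr rfl
      · rintro (rfl | rfl)
        · exact ⟨0, rfl⟩
        · exact ⟨1, rfl⟩
    rw [h2] at h1
    exact h1.symm
  have hx : x ∈ Subalgebra.toSubmodule (Algebra.adjoin ℂ ({egen q, dgen q} : Set (QWeyl q))) := by
    rw [hadj]; trivial
  rw [Algebra.adjoin_eq_span] at hx
  refine Submodule.span_le.mpr ?_ hx
  intro y hy
  obtain ⟨l, hl, rfl⟩ := Submonoid.exists_list_of_mem_closure hy
  have hw : l.prod ∈ SpanLe q l.length :=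
    part3 q l.length l (fun z hz => hl z hz) rfl
  refine Submodule.span_le.mpr ?_ hw
  rintro z ⟨m, n, _, rfl⟩
  exact Submodule.subset_span ⟨(m, n), rfl⟩

end QWAux

theorem stmt8 (q : ℝ) (hq0 : 0 ≤ q) (hq1 : q < 1) :
    LinearIndependent ℂ (fun p : ℕ × ℕ => egen q ^ p.1 * dgen q ^ p.2) ∧
    Submodule.span ℂ (Set.range fun p : ℕ × ℕ => egen q ^ p.1 * dgen q ^ p.2) = ⊤ ∧
    (∀ (L : ℕ) (l : List (QWeyl q)), (∀ x ∈ l, x = egen q ∨ x = dgen q) → l.length = L →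
      l.prod ∈ Submodule.span ℂ
        {x : QWeyl q | ∃ m n : ℕ, m + n ≤ L ∧ x = egen q ^ m * dgen q ^ n}) :=
  ⟨QWAux.linind q hq0, QWAux.span_top q, fun L l h hl => QWAux.part3 q L l h hl⟩

end
end

section
/- Let q, t ∈ ℂ, let A be a unital associative ℂ-algebra, and let 𝖾, 𝖽 ∈ A satisfy 𝖽𝖾 − q·𝖾𝖽 = 1. Define polynomials H_n(x;t) ∈ ℂ[x] by H_0(x;t) = 1, H_1(x;t) = x, and x·H_n(x;t) = H_{n+1}(x;t) + t·[n]_q·H_{n−1}(x;t) for n ≥ 1. Then for every n ≥ 0, the evaluation of the polynomial H_n(·;t) at the element t·𝖾 + 𝖽 ∈ A equals Σ_{k=0}^{n} binom_q(n,k)·t^k·𝖾^k·𝖽^{n−k}. -/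
/-!
Write `S n = ∑ k, [n choose k]_q • e^k * d^(n-k)`. Replacing `e` by `t • e` absorbs the powers
`t^k` and turns the relation into `d e - q e d = t`. The q-Pascal rule gives
`S (n+1) = e * S n + S' n * d`, where `S'` is `S` with `e` replaced by `q • e`. Moving `d` to the
right through `e^(k+1)` costs `t [k+1]_q e^k`, and by the absorption identity
`[k+1]_q [n+1 choose k+1]_q = [n+1]_q [n choose k]_q` these corrections add up to
`d * S (n+1) = S' (n+1) * d + t [n+1]_q S n`. Adding the two,
`(e + d) * S (n+1) = S (n+2) + t [n+1]_q S n`, the three-term recurrence of `H_n`.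
-/

noncomputable section

open scoped BigOperators

/-- The Gaussian (q-)binomial coefficient, characterized by
`qBinom q n 0 = 1`, `qBinom q 0 (k+1) = 0` and the Pascal-type rule
`qBinom q (n+1) (k+1) = q^(k+1) * qBinom q n (k+1) + qBinom q n k`. -/
def qBinom (q : ℂ) : ℕ → ℕ → ℂ
  | _, 0 => 1
  | 0, _ + 1 => 0
  | n + 1, k + 1 => q ^ (k + 1) * qBinom q n (k + 1) + qBinom q n k

/-- The monic continuous q-Hermite polynomials `H_n(x;t)`:
`H_0 = 1`, `H_1 = x`, and `x·H_n = H_{n+1} + t·[n]_q·H_{n-1}`. -/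
def qHermite (q t : ℂ) : ℕ → Polynomial ℂ
  | 0 => 1
  | 1 => Polynomial.X
  | n + 2 =>
      Polynomial.X * qHermite q t (n + 1)
        - Polynomial.C (t * ∑ i ∈ Finset.range (n + 1), q ^ i) * qHermite q t n

open Finset

lemma qBinom_zero_right (q : ℂ) (n : ℕ) : qBinom q n 0 = 1 := by
  cases n <;> rfl

lemma qBinom_succ_succ (q : ℂ) (n k : ℕ) :
    qBinom q (n + 1) (k + 1) = q ^ (k + 1) * qBinom q n (k + 1) + qBinom q n k :=
  rfl

lemma qBinom_eq_zero_of_lt (q : ℂ) {n k : ℕ} (h : n < k) : qBinom q n k = 0 := by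
  induction n generalizing k with
  | zero => obtain ⟨k, rfl⟩ := Nat.exists_eq_add_one_of_ne_zero h.ne'; rfl
  | succ n ih =>
    obtain ⟨k, rfl⟩ := Nat.exists_eq_add_one_of_ne_zero (Nat.ne_zero_of_lt h)
    rw [qBinom_succ_succ, ih (by omega), ih (by omega), mul_zero, add_zero]

lemma geom_sum_mul_qBinom_succ (q : ℂ) (n k : ℕ) :
    (∑ i ∈ range (k + 1), q ^ i) * qBinom q n (k + 1) =
      (∑ i ∈ range (n - k), q ^ i) * qBinom q n k := by
  induction n generalizing k with
  | zero => simp [qBinom_eq_zero_of_lt q k.succ_pos]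
  | succ n ih =>
    rcases k with _ | j
    · have hn1 : qBinom q n 1 = ∑ i ∈ range n, q ^ i := by
        simpa [qBinom_zero_right] using ih 0
      simp [qBinom_succ_succ, hn1, qBinom_zero_right, geom_sum_succ]
    rcases le_or_gt n j with hnj | hjn
    · simp [qBinom_eq_zero_of_lt q (show n + 1 < j + 1 + 1 by omega),
        Nat.sub_eq_zero_of_le (show n + 1 ≤ j + 1 by omega)]
    · have hm : n - j = n - (j + 1) + 1 := by omega
      have e2 := ih j
      rw [hm] at e2
      rw [Nat.add_sub_add_right, qBinom_succ_succ, qBinom_succ_succ q n j, hm]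
      linear_combination q ^ (j + 2) * ih (j + 1) + e2
        + qBinom q n (j + 1) * (geom_sum_succ' (x := q) (n := j + 1))
        - q ^ (j + 1) * qBinom q n (j + 1) * (geom_sum_succ (x := q) (n := n - (j + 1)))

lemma geom_sum_mul_qBinom_succ_succ (q : ℂ) (n k : ℕ) :
    (∑ i ∈ range (k + 1), q ^ i) * qBinom q (n + 1) (k + 1) =
      (∑ i ∈ range (n + 1), q ^ i) * qBinom q n k := by
  rcases le_or_gt k n with hkn | hnk
  · have hsplit : ∑ i ∈ range (n + 1), q ^ i =
        ∑ i ∈ range (k + 1), q ^ i + q ^ (k + 1) * ∑ i ∈ range (n - k), q ^ i := by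
      rw [show n + 1 = k + 1 + (n - k) by omega, sum_range_add, mul_sum]
      simp only [pow_add]
    rw [qBinom_succ_succ]
    linear_combination q ^ (k + 1) * geom_sum_mul_qBinom_succ q n k - qBinom q n k * hsplit
  · simp [qBinom_eq_zero_of_lt q hnk, qBinom_eq_zero_of_lt q (Nat.succ_lt_succ hnk)]

section QCommutation

variable {R A : Type*} [CommSemiring R] [Ring A] [Algebra R A] {q s : R} {e d : A}

lemma mul_pow_succ_of_sub_smul_eq (h : d * e - q • (e * d) = s • 1) (k : ℕ) :
    d * e ^ (k + 1) =
      q ^ (k + 1) • (e ^ (k + 1) * d) + (s * ∑ i ∈ range (k + 1), q ^ i) • e ^ k := by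
  have hde : d * e = q • (e * d) + s • 1 := by rw [← h, add_sub_cancel]
  induction k with
  | zero => simpa using hde
  | succ k ih =>
    rw [pow_succ e (k + 1), ← mul_assoc, ih, add_mul, smul_mul_assoc, smul_mul_assoc, mul_assoc,
      hde, geom_sum_succ' (n := k + 1), mul_add, mul_smul_comm, mul_smul_comm, ← mul_assoc,
      ← pow_succ, ← pow_succ, mul_one]
    match_scalars <;> ring

end QCommutation

section QBinomSum

variable {A : Type*} [Ring A] [Algebra ℂ A]

def qBinomSum (q : ℂ) (e d : A) (n : ℕ) : A :=
  ∑ k ∈ range (n + 1), qBinom q n k • (e ^ k * d ^ (n - k))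

@[simp]
lemma qBinomSum_zero (q : ℂ) (e d : A) : qBinomSum q e d 0 = 1 := by
  simp [qBinomSum, qBinom_zero_right]

lemma qBinomSum_succ (q : ℂ) (e d : A) (n : ℕ) :
    qBinomSum q e d (n + 1) = e * qBinomSum q e d n + qBinomSum q (q • e) d n * d := by
  have hleft : e * qBinomSum q e d n =
      ∑ k ∈ range (n + 1), qBinom q n k • (e ^ (k + 1) * d ^ (n - k)) := by
    simp only [qBinomSum, mul_sum, mul_smul_comm, ← mul_assoc, ← pow_succ']
  have hright : qBinomSum q (q • e) d n * d = d ^ (n + 1) +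
      ∑ k ∈ range (n + 1), (q ^ (k + 1) * qBinom q n (k + 1)) • (e ^ (k + 1) * d ^ (n - k)) := by
    rw [qBinomSum, sum_mul, sum_range_succ', sum_range_succ,
      qBinom_eq_zero_of_lt q n.lt_succ_self, mul_zero, zero_smul, add_zero, add_comm]
    congr 1
    · simp [qBinom_zero_right, pow_succ]
    · refine sum_congr rfl fun k hk => ?_
      simp only [smul_pow, smul_mul_assoc, smul_smul]
      rw [mul_comm, mul_assoc, ← pow_succ,
        show n - (k + 1) + 1 = n - k by have := mem_range.mp hk; omega]
  rw [hleft, hright, qBinomSum, sum_range_succ']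
  simp only [qBinom_succ_succ, add_smul, sum_add_distrib, Nat.add_sub_add_right, qBinom_zero_right,
    one_smul, pow_zero, one_mul, Nat.sub_zero]
  abel

variable {q s : ℂ} {e d : A}

lemma mul_qBinomSum_succ (h : d * e - q • (e * d) = s • 1) (n : ℕ) :
    d * qBinomSum q e d (n + 1) = qBinomSum q (q • e) d (n + 1) * d +
      (s * ∑ i ∈ range (n + 1), q ^ i) • qBinomSum q e d n := by
  have habsorb : (s * ∑ i ∈ range (n + 1), q ^ i) • qBinomSum q e d n =
      ∑ k ∈ range (n + 1),
        (s * (∑ i ∈ range (k + 1), q ^ i) * qBinom q (n + 1) (k + 1)) • (e ^ k * d ^ (n - k)) := by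
    rw [qBinomSum, smul_sum]
    refine sum_congr rfl fun k _ => ?_
    rw [smul_smul, mul_assoc, mul_assoc, geom_sum_mul_qBinom_succ_succ]
  rw [habsorb, qBinomSum, qBinomSum, mul_sum, sum_mul, sum_range_succ', sum_range_succ' _ (n + 1),
    add_right_comm, ← sum_add_distrib]
  congr 1
  · refine sum_congr rfl fun k _ => ?_
    rw [Nat.add_sub_add_right, mul_smul_comm, ← mul_assoc, mul_pow_succ_of_sub_smul_eq h]
    simp only [smul_pow, smul_mul_assoc, add_mul, mul_assoc, ← pow_succ, ← pow_succ', smul_add,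
      smul_smul]
    match_scalars <;> ring
  · simp [qBinom_zero_right, ← pow_succ, ← pow_succ']

lemma add_mul_qBinomSum_succ (h : d * e - q • (e * d) = s • 1) (n : ℕ) :
    (e + d) * qBinomSum q e d (n + 1) =
      qBinomSum q e d (n + 2) + (s * ∑ i ∈ range (n + 1), q ^ i) • qBinomSum q e d n := by
  rw [add_mul, mul_qBinomSum_succ h, qBinomSum_succ q e d (n + 1), add_assoc]

lemma aeval_qHermite_eq_qBinomSum (h : d * e - q • (e * d) = s • 1) (n : ℕ) :
    Polynomial.aeval (e + d) (qHermite q s n) = qBinomSum q e d n := by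
  induction n using Nat.twoStepInduction with
  | zero => simp [qHermite]
  | one => simp [qHermite, qBinomSum_succ]
  | more n ih ih' =>
    rw [qHermite, map_sub, map_mul, map_mul, Polynomial.aeval_X, Polynomial.aeval_C, ih, ih',
      ← Algebra.smul_def, add_mul_qBinomSum_succ h, add_sub_cancel_right]

end QBinomSum

theorem stmt10 (q t : ℂ) (A : Type*) [Ring A] [Algebra ℂ A] (e d : A)
    (h : d * e - q • (e * d) = 1) :
    ∀ n : ℕ,
      Polynomial.aeval (t • e + d) (qHermite q t n) =
        ∑ k ∈ Finset.range (n + 1), (qBinom q n k * t ^ k) • (e ^ k * d ^ (n - k)) := by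
  have hte : d * (t • e) - q • (t • e * d) = t • 1 := by
    rw [mul_smul_comm, smul_mul_assoc, smul_comm q t, ← smul_sub, h]
  intro n
  rw [aeval_qHermite_eq_qBinomSum hte, qBinomSum]
  refine sum_congr rfl fun k _ => ?_
  rw [smul_pow, smul_mul_assoc, smul_smul, mul_comm]

end
end

section
/- Let 0 < q < 1, let α, β, γ, δ > 0 and let N ∈ ℕ satisfy α·β = q^N·γ·δ. Set θ = 1/√(1−q), Δ(x) = 1/θ + θ·x, and Π = θ^{N+1}·∏_{j=1}^{N+1}(α + q^{j−1}·γ). Then there exists a function φ : ℕ×ℕ → ℝ such that: φ(m,n) = 0 whenever m + n ≤ N; φ(m,n) = α^n·γ^m·q^{m(m−1)/2}/Π whenever m + n = N+1; and for all m, n ≥ 0 the invariance equations (W) and (V) hold. -/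
noncomputable section

open scoped BigOperators

/-- `θ = 1/√(1-q)`. -/
def theta (q : ℝ) : ℝ := 1 / Real.sqrt (1 - q)

/-- `Δ(x) = θ⁻¹ + θ·x`. -/
def Delta (q x : ℝ) : ℝ := (theta q)⁻¹ + theta q * x

/-- The q-integer `[k]_q = 1 + q + ⋯ + q^{k-1}` (with `[0]_q = 0`). -/
def qInt (q : ℝ) (k : ℕ) : ℝ := ∑ i ∈ Finset.range k, q ^ i

/-- Invariance equation (W) at `(m,n)`; the term involving index `m-1` is written with
truncated subtraction, its coefficient `[0]_q = 0` vanishing when `m = 0`. -/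
def Weq (q α γ : ℝ) (φ : ℕ → ℕ → ℝ) (m n : ℕ) : Prop :=
  α * φ (m + 1) n - q ^ m * γ * φ m (n + 1) =
    Delta q (γ - α) * φ m n + γ * qInt q m * φ (m - 1) n

/-- Invariance equation (V) at `(m,n)`; the term involving index `n-1` is written with
truncated subtraction, its coefficient `[0]_q = 0` vanishing when `n = 0`. -/
def Veq (q β δ : ℝ) (φ : ℕ → ℕ → ℝ) (m n : ℕ) : Prop :=
  -(q ^ n * δ) * φ (m + 1) n + β * φ m (n + 1) =
    Delta q (δ - β) * φ m n + δ * qInt q n * φ m (n - 1)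

namespace Stmt11Aux

lemma qInt_zero (q : ℝ) : qInt q 0 = 0 := by simp [qInt]

lemma qInt_succ (q : ℝ) (k : ℕ) : qInt q (k + 1) = qInt q k + q ^ k :=
  Finset.sum_range_succ _ _

lemma tri_succ (m : ℕ) : (m + 1) * m / 2 = m * (m - 1) / 2 + m := by
  have h : (m + 1) * m = (m + 1) * ((m + 1) - 1) := by simp
  rw [h, ← Nat.choose_two_right, ← Nat.choose_two_right, Nat.choose_succ_succ,
    Nat.choose_one_right, Nat.add_comm]

/-- target value on the diagonal m+n = N+1 -/
def cfun (q α γ : ℝ) (N m n : ℕ) : ℝ :=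
  α ^ n * γ ^ m * q ^ (m * (m - 1) / 2) /
    (theta q ^ (N + 1) * ∏ j ∈ Finset.range (N + 1), (α + q ^ j * γ))

/-- one step of the bottom-row recursion -/
def fnext (q α β γ δ : ℝ) (N : ℕ) (k : ℕ) (x y : ℝ) : ℝ :=
  if k + 1 ≤ N then 0
  else if k + 1 = N + 1 then cfun q α γ N (N + 1) 0
  else ((Delta q (γ - α) * β + q ^ k * γ * Delta q (δ - β)) * x + β * γ * qInt q k * y) /
      (α * β - q ^ k * γ * δ)

/-- pairs (f k, f (k+1)) of the bottom row -/
def fseq (q α β γ δ : ℝ) (N : ℕ) : ℕ → ℝ × ℝ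
  | 0 => (0, fnext q α β γ δ N 0 0 0)
  | k + 1 => ((fseq q α β γ δ N k).2,
      fnext q α β γ δ N (k + 1) (fseq q α β γ δ N k).2 (fseq q α β γ δ N k).1)

/-- the bottom row -/
def ff (q α β γ δ : ℝ) (N : ℕ) (m : ℕ) : ℝ := (fseq q α β γ δ N m).1

lemma ff_succ (q α β γ δ : ℝ) (N : ℕ) :
    ∀ k, ff q α β γ δ N (k + 1) =
      fnext q α β γ δ N k (ff q α β γ δ N k) (ff q α β γ δ N (k - 1))
  | 0 => rfl
  | _ + 1 => rfl

lemma ff_zero_of_le (q α β γ δ : ℝ) (N : ℕ) : ∀ m, m ≤ N → ff q α β γ δ N m = 0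
  | 0, _ => rfl
  | m + 1, h => by rw [ff_succ, fnext, if_pos h]

/-- one step of the vertical recursion -/
def vnext (q β δ : ℝ) (n : ℕ) (r p : ℕ → ℝ) : ℕ → ℝ :=
  fun m => (q ^ n * δ * r (m + 1) + Delta q (δ - β) * r m + δ * qInt q n * p m) / β

/-- pairs (row (n-1), row n) -/
def prows (q α β γ δ : ℝ) (N : ℕ) : ℕ → (ℕ → ℝ) × (ℕ → ℝ)
  | 0 => (ff q α β γ δ N, ff q α β γ δ N)
  | n + 1 => ((prows q α β γ δ N n).2,
      vnext q β δ n (prows q α β γ δ N n).2 (prows q α β γ δ N n).1)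

/-- the invariant function -/
def phi (q α β γ δ : ℝ) (N : ℕ) (m n : ℕ) : ℝ := (prows q α β γ δ N n).2 m

lemma phi_zero' (q α β γ δ : ℝ) (N m : ℕ) : phi q α β γ δ N m 0 = ff q α β γ δ N m := rfl

lemma phi_succ (q α β γ δ : ℝ) (N : ℕ) : ∀ m n,
    phi q α β γ δ N m (n + 1) =
      (q ^ n * δ * phi q α β γ δ N (m + 1) n + Delta q (δ - β) * phi q α β γ δ N m n +
        δ * qInt q n * phi q α β γ δ N m (n - 1)) / β
  | _, 0 => rfl
  | _, _ + 1 => rfl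

/-- W-discrepancy -/
def Wde (q α γ : ℝ) (φ : ℕ → ℕ → ℝ) (m n : ℕ) : ℝ :=
  α * φ (m + 1) n - q ^ m * γ * φ m (n + 1) -
    Delta q (γ - α) * φ m n - γ * qInt q m * φ (m - 1) n

set_option maxHeartbeats 2000000 in
/-- key propagation identity -/
lemma KI (q α β γ δ : ℝ) (φ : ℕ → ℕ → ℝ) (hβ : β ≠ 0)
    (hV : ∀ x k, φ x (k + 1) =
      (q ^ k * δ * φ (x + 1) k + Delta q (δ - β) * φ x k + δ * qInt q k * φ x (k - 1)) / β)
    (m n : ℕ) :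
    β * Wde q α γ φ m (n + 1) =
      Delta q (δ - β) * Wde q α γ φ m n + q ^ n * δ * Wde q α γ φ (m + 1) n +
        δ * qInt q n * Wde q α γ φ m (n - 1) := by
  rcases n with _ | n <;> rcases m with _ | m <;>
    · simp only [Wde]
      simp only [hV, Nat.succ_eq_add_one, Nat.succ_sub_one, Nat.add_sub_cancel, Nat.zero_sub,
        qInt_zero, qInt_succ]
      field_simp
      ring

end Stmt11Aux

open Stmt11Aux in
theorem stmt11 (q α β γ δ : ℝ) (N : ℕ) (hq0 : 0 < q) (hq1 : q < 1)
    (hα : 0 < α) (hβ : 0 < β) (hγ : 0 < γ) (hδ : 0 < δ)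
    (hsing : α * β = q ^ N * γ * δ) :
    ∃ φ : ℕ → ℕ → ℝ,
      (∀ m n : ℕ, m + n ≤ N → φ m n = 0) ∧
      (∀ m n : ℕ, m + n = N + 1 →
        φ m n = α ^ n * γ ^ m * q ^ (m * (m - 1) / 2) /
          (theta q ^ (N + 1) * ∏ j ∈ Finset.range (N + 1), (α + q ^ j * γ))) ∧
      (∀ m n : ℕ, Weq q α γ φ m n ∧ Veq q β δ φ m n) := by
  have hβ' : β ≠ 0 := ne_of_gt hβ
  have hV := phi_succ q α β γ δ N
  have hZ := ff_zero_of_le q α β γ δ N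
  -- the zero region
  have hzero : ∀ n, (∀ m, m + n ≤ N → phi q α β γ δ N m n = 0) ∧
      (∀ m, m + (n + 1) ≤ N → phi q α β γ δ N m (n + 1) = 0) := by
    intro n
    induction n with
    | zero =>
      refine ⟨fun m h => hZ m (by omega), fun m h => ?_⟩
      rw [hV m 0]
      simp only [Nat.zero_sub, phi_zero']
      rw [hZ (m + 1) (by omega), hZ m (by omega)]
      simp
    | succ n ih =>
      refine ⟨ih.2, fun m h => ?_⟩
      rw [hV m (n + 1), Nat.add_sub_cancel, ih.2 (m + 1) (by omega), ih.2 m (by omega),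
        ih.1 m (by omega)]
      simp
  -- the diagonal values
  have hdiag : ∀ n m, m + n = N + 1 → phi q α β γ δ N m n = cfun q α γ N m n := by
    intro n
    induction n with
    | zero =>
      intro m h
      have hm : m = N + 1 := by omega
      subst hm
      rw [phi_zero', ff_succ, fnext, if_neg (by omega), if_pos rfl]
    | succ n ih =>
      intro m h
      have h1q : (0 : ℝ) < 1 - q := by linarith
      have hθ : 0 < theta q := div_pos one_pos (Real.sqrt_pos.mpr h1q)
      have hPi : theta q ^ (N + 1) * ∏ j ∈ Finset.range (N + 1), (α + q ^ j * γ) ≠ 0 :=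
        ne_of_gt (mul_pos (pow_pos hθ _) (Finset.prod_pos fun j _ => by positivity))
      have hN : N = m + n := by omega
      have hs2 : α * β = q ^ m * q ^ n * γ * δ := by rw [hsing, hN, pow_add]
      rw [hV m n, ih (m + 1) (by omega), (hzero n).1 m (by omega),
        (hzero (n - 1)).1 m (by omega)]
      simp only [cfun, Nat.add_sub_cancel, tri_succ, pow_add, pow_succ]
      field_simp
      linear_combination (-(q ^ (m * (m - 1) / 2) * α ^ n * γ ^ m)) * hs2
  -- the W equation on the bottom row
  have hW0 : ∀ m, Wde q α γ (phi q α β γ δ N) m 0 = 0 := by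
    intro m
    rcases lt_trichotomy m N with hm | hm | hm
    · simp only [Wde, hV m 0, Nat.zero_sub, phi_zero']
      rw [hZ (m + 1) (by omega), hZ m (by omega), hZ (m - 1) (by omega)]
      simp
    · subst hm
      simp only [Wde, hV m 0, Nat.zero_sub, phi_zero']
      rw [hZ m le_rfl, hZ (m - 1) (by omega), qInt_zero]
      field_simp
      linear_combination (ff q α β γ δ m (m + 1)) * hsing
    · have hd : α * β - q ^ m * γ * δ ≠ 0 := by
        have hqq : q ^ m < q ^ N := pow_lt_pow_right_of_lt_one₀ hq0 hq1 hm
        have he : α * β - q ^ m * γ * δ = γ * δ * (q ^ N - q ^ m) := by rw [hsing]; ring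
        rw [he]
        have : (0 : ℝ) < q ^ N - q ^ m := by linarith
        positivity
      simp only [Wde, hV m 0, Nat.zero_sub, phi_zero']
      rw [ff_succ, fnext, if_neg (by omega), if_neg (by omega), qInt_zero]
      have hd2 : α * β - γ * q ^ m * δ ≠ 0 := by rwa [mul_comm γ (q ^ m)]
      field_simp
      ring
  -- the W equation everywhere
  have hW : ∀ n, (∀ m, Wde q α γ (phi q α β γ δ N) m n = 0) ∧
      (∀ m, Wde q α γ (phi q α β γ δ N) m (n + 1) = 0) := by
    intro n
    induction n with
    | zero =>
      refine ⟨hW0, fun m => ?_⟩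
      have h := KI q α β γ δ (phi q α β γ δ N) hβ' hV m 0
      rw [hW0 m, hW0 (m + 1), qInt_zero] at h
      have h2 : β * Wde q α γ (phi q α β γ δ N) m (0 + 1) = 0 := by rw [h]; ring
      exact (mul_eq_zero.mp h2).resolve_left hβ'
    | succ n ih =>
      refine ⟨ih.2, fun m => ?_⟩
      have h := KI q α β γ δ (phi q α β γ δ N) hβ' hV m (n + 1)
      rw [Nat.add_sub_cancel, ih.2 m, ih.2 (m + 1), ih.1 m] at h
      have h2 : β * Wde q α γ (phi q α β γ δ N) m (n + 1 + 1) = 0 := by rw [h]; ring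
      exact (mul_eq_zero.mp h2).resolve_left hβ'
  refine ⟨phi q α β γ δ N, fun m n h => (hzero n).1 m h, fun m n h => hdiag n m h,
    fun m n => ⟨?_, ?_⟩⟩
  · have h := (hW n).1 m
    simp only [Wde] at h
    rw [Weq]
    linarith
  · rw [Veq, hV m n]
    field_simp
    ring
end
end

section
/- Let 0 < q < 1 and α, β, γ, δ ≥ 0, set θ = 1/√(1−q) and Δ(x) = 1/θ + θ·x. Let m ≥ 0 and n ≥ 1 be integers and put K = m + n. Suppose φ : {(i,j) ∈ ℕ×ℕ : i + j ≤ K} → ℝ satisfies the invariance equations (W) and (V) at every (i,j) with i + j ≤ K − 1. Then the consistency identity holds: (β·Δ(γ−α) + γ·Δ(δ−β)·q^m)·φ(m,n) + γδ·[n]_q·q^m·φ(m,n−1) + βγ·[m]_q·φ(m−1,n) = (α·Δ(δ−β) + δ·Δ(γ−α)·q^{n−1})·φ(m+1,n−1) + αδ·[n−1]_q·φ(m+1,n−2) + γδ·q^{n−1}·[m+1]_q·φ(m,n−1), where terms with a negative index are omitted (their coefficients [0]_q vanish). -/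
noncomputable section

open scoped BigOperators

lemma qInt_succ (q : ℝ) (k : ℕ) : qInt q (k + 1) = qInt q k + q ^ k :=
  Finset.sum_range_succ _ _

lemma qInt_mul_apply_sub_one_add_one (q : ℝ) (f : ℕ → ℝ) (k : ℕ) :
    qInt q k * f (k - 1 + 1) = qInt q k * f k := by
  cases k <;> simp [qInt]

/-- The consistency identity at `(m, n + 1)` is the combination
`-Δ(δ-β)·W(m,n) + Δ(γ-α)·V(m,n) + γ[m]_q·V(m-1,n) - δ[n]_q·W(m,n-1)`;
no case split at `m = 0` or `n = 0` is needed, since the truncated indices only occur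
behind a factor `[0]_q = 0`. -/
lemma consistency_of_invariance {q α β γ δ : ℝ} {φ : ℕ → ℕ → ℝ} {m n : ℕ}
    (hWmn : Weq q α γ φ m n) (hVmn : Veq q β δ φ m n)
    (hVm₁n : Veq q β δ φ (m - 1) n) (hWmn₁ : Weq q α γ φ m (n - 1)) :
    (β * Delta q (γ - α) + γ * Delta q (δ - β) * q ^ m) * φ m (n + 1)
        + γ * δ * qInt q (n + 1) * q ^ m * φ m n
        + β * γ * qInt q m * φ (m - 1) (n + 1) =
      (α * Delta q (δ - β) + δ * Delta q (γ - α) * q ^ n) * φ (m + 1) n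
        + α * δ * qInt q n * φ (m + 1) (n - 1)
        + γ * δ * q ^ n * qInt q (m + 1) * φ m n := by
  unfold Weq Veq at *
  have hm₁ := qInt_mul_apply_sub_one_add_one q (fun i ↦ φ i n) m
  have hn₁ := qInt_mul_apply_sub_one_add_one q (φ m) n
  rw [qInt_succ, qInt_succ]
  linear_combination (-Delta q (δ - β)) * hWmn + Delta q (γ - α) * hVmn
    + γ * qInt q m * hVm₁n - δ * qInt q n * hWmn₁ + γ * δ * q ^ n * hm₁ - δ * q ^ m * γ * hn₁

theorem stmt12_general (q α β γ δ : ℝ)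
    (m n : ℕ) (hn : 1 ≤ n) (φ : ℕ → ℕ → ℝ)
    (hW : ∀ i j : ℕ, i + j ≤ m + n - 1 → Weq q α γ φ i j)
    (hV : ∀ i j : ℕ, i + j ≤ m + n - 1 → Veq q β δ φ i j) :
    (β * Delta q (γ - α) + γ * Delta q (δ - β) * q ^ m) * φ m n
        + γ * δ * qInt q n * q ^ m * φ m (n - 1)
        + β * γ * qInt q m * φ (m - 1) n =
      (α * Delta q (δ - β) + δ * Delta q (γ - α) * q ^ (n - 1)) * φ (m + 1) (n - 1)
        + α * δ * qInt q (n - 1) * φ (m + 1) (n - 2)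
        + γ * δ * q ^ (n - 1) * qInt q (m + 1) * φ m (n - 1) := by
  obtain ⟨n, rfl⟩ := Nat.exists_eq_add_of_le' hn
  exact consistency_of_invariance (hW m n (by omega)) (hV m n (by omega))
    (hV (m - 1) n (by omega)) (hW m (n - 1) (by omega))

theorem stmt12 (q α β γ δ : ℝ) (hq0 : 0 < q) (hq1 : q < 1)
    (hα : 0 ≤ α) (hβ : 0 ≤ β) (hγ : 0 ≤ γ) (hδ : 0 ≤ δ)
    (m n : ℕ) (hn : 1 ≤ n) (φ : ℕ → ℕ → ℝ)
    (hW : ∀ i j : ℕ, i + j ≤ m + n - 1 → Weq q α γ φ i j)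
    (hV : ∀ i j : ℕ, i + j ≤ m + n - 1 → Veq q β δ φ i j) :
    (β * Delta q (γ - α) + γ * Delta q (δ - β) * q ^ m) * φ m n
        + γ * δ * qInt q n * q ^ m * φ m (n - 1)
        + β * γ * qInt q m * φ (m - 1) n =
      (α * Delta q (δ - β) + δ * Delta q (γ - α) * q ^ (n - 1)) * φ (m + 1) (n - 1)
        + α * δ * qInt q (n - 1) * φ (m + 1) (n - 2)
        + γ * δ * q ^ (n - 1) * qInt q (m + 1) * φ m (n - 1) :=
  stmt12_general q α β γ δ m n hn φ hW hV

end
end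

section
/- Let 0 < q < 1, let α, β, γ, δ > 0 and let N ∈ ℕ satisfy α·β = q^N·γ·δ. Set θ = 1/√(1−q), Π = θ^{N+1}·∏_{j=1}^{N+1}(α + q^{j−1}·γ), and p_j = α/(α + γ·q^{j−1}). Let A be a unital associative ℝ-algebra containing elements 𝖾, 𝖽 with 𝖽𝖾 − q·𝖾𝖽 = 1, and set 𝐄 = θ²·1 + θ·𝖾, 𝐃 = θ²·1 + θ·𝖽. Let φ : A → ℝ be ℝ-linear with φ(𝖾^m·𝖽^n) = 0 for all (m,n) with m + n ≤ N and φ(𝖾^m·𝖽^n) = α^n·γ^m·q^{m(m−1)/2}/Π for all (m,n) with m + n = N+1. Then: (i) for every (τ₁,…,τ_{N+1}) ∈ {0,1}^{N+1}: φ(∏_{j=1}^{N+1} 𝐃^{τ_j}·𝐄^{1−τ_j}) = ∏_{j=1}^{N+1} p_j^{τ_j}·(1−p_j)^{1−τ_j}; and (ii) for every (m,n) with m + n ≤ N: φ((α𝐄 − γ𝐃)·𝖾^m𝖽^n) = φ(𝖾^m𝖽^n) and φ(𝖾^m𝖽^n·(β𝐃 − δ𝐄)) = φ(𝖾^m𝖽^n).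 -/
noncomputable section

open scoped BigOperators

namespace S13

/-- number of (d,e) inversions -/
def inv : List Bool → ℕ
  | [] => 0
  | b :: l => (if b then l.count false else 0) + inv l

def Ee : List Bool → ℕ
  | [] => 0
  | _ :: l => l.count false + Ee l

lemma count_ft (l : List Bool) : l.count false + l.count true = l.length := by
  induction l with
  | nil => simp
  | cons b l ih => cases b <;> simp [List.count_cons] <;> omega

lemma Ee_eq (l : List Bool) : Ee l = inv l + (l.count false).choose 2 := by
  induction l with
  | nil => simp [Ee, inv]
  | cons b l ih =>
    cases b <;> simp [Ee, inv, List.count_cons, ih, Nat.choose_succ_succ, Nat.choose_one_right] <;> omega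

variable {A : Type*} [Ring A] [Algebra ℝ A]


lemma qInt_succ (q : ℝ) (a : ℕ) : qInt q (a+1) = q * qInt q a + 1 := by
  simp [qInt, Finset.sum_range_succ', Finset.mul_sum, pow_succ', mul_comm]

lemma qInt_succ' (q : ℝ) (a : ℕ) : qInt q (a+1) = qInt q a + q ^ a := by
  simp [qInt, Finset.sum_range_succ]

lemma d_pow (q : ℝ) (e d : A) (hde : d * e - q • (e * d) = 1) :
    ∀ a : ℕ, d * e ^ a = (q ^ a) • (e ^ a * d) + (qInt q a) • e ^ (a - 1) := by
  have hde' : d * e = q • (e * d) + 1 := by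
    rw [← hde]; abel
  intro a
  induction a with
  | zero => simp [qInt]
  | succ a ih =>
    rw [pow_succ' e a, ← mul_assoc, hde', add_mul, one_mul, smul_mul_assoc,
      mul_assoc, ih]
    rw [mul_add, mul_smul_comm, mul_smul_comm, ← mul_assoc, ← pow_succ' e a]
    cases a with
    | zero => simp [qInt_succ, qInt]
    | succ b =>
      rw [Nat.succ_sub_one, Nat.succ_sub_one, ← pow_succ' e b]
      have key : qInt q b + q ^ b = q * qInt q b + 1 := by
        rw [← qInt_succ', qInt_succ]
      match_scalars <;> try ring1
      all_goals
        try simp only [show (2+b) = (b+1)+1 from by ring, show (1+b) = b+1 from by ring,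
          qInt_succ']
      all_goals (first | ring1 | linear_combination -key | linear_combination key)

lemma pow_e (q : ℝ) (e d : A) (hde : d * e - q • (e * d) = 1) :
    ∀ a : ℕ, d ^ a * e = (q ^ a) • (e * d ^ a) + (qInt q a) • d ^ (a - 1) := by
  have hde' : d * e = q • (e * d) + 1 := by
    rw [← hde]; abel
  intro a
  induction a with
  | zero => simp [qInt]
  | succ a ih =>
    rw [pow_succ' d a, mul_assoc, ih, mul_add, mul_smul_comm, mul_smul_comm,
      ← mul_assoc, hde', add_mul, one_mul, smul_mul_assoc, mul_assoc, ← pow_succ' d a]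
    cases a with
    | zero => simp [qInt_succ, qInt]
    | succ b =>
      rw [Nat.succ_sub_one, Nat.succ_sub_one, ← pow_succ' d b]
      have key : qInt q b + q ^ b = q * qInt q b + 1 := by
        rw [← qInt_succ', qInt_succ]
      match_scalars <;> try ring1
      all_goals
        try simp only [show (2+b) = (b+1)+1 from by ring, show (1+b) = b+1 from by ring,
          qInt_succ']
      all_goals (first | ring1 | linear_combination -key | linear_combination key)



def Kd (e d : A) (k : ℕ) : Submodule ℝ A :=
  Submodule.span ℝ {x | ∃ a b : ℕ, a + b ≤ k ∧ x = e ^ a * d ^ b}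

lemma mem_Kd (e d : A) {a b k : ℕ} (h : a + b ≤ k) : e ^ a * d ^ b ∈ Kd e d k :=
  Submodule.subset_span ⟨a, b, h, rfl⟩

lemma Kd_mono (e d : A) {k k' : ℕ} (h : k ≤ k') : Kd e d k ≤ Kd e d k' :=
  Submodule.span_mono (fun x ⟨a, b, h1, h2⟩ => ⟨a, b, h1.trans h, h2⟩)

lemma one_mem_Kd (e d : A) (k : ℕ) : (1 : A) ∈ Kd e d k := by
  have := mem_Kd e d (a := 0) (b := 0) (k := k) (by omega)
  simpa using this

lemma mulE_Kd (e d : A) {k : ℕ} {x : A} (hx : x ∈ Kd e d k) :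
    e * x ∈ Kd e d (k + 1) := by
  induction hx using Submodule.span_induction with
  | mem x h =>
    obtain ⟨a, b, hab, rfl⟩ := h
    rw [← mul_assoc, ← pow_succ']
    exact mem_Kd e d (by omega)
  | zero => simpa using Submodule.zero_mem _
  | add x y _ _ hx hy => rw [mul_add]; exact Submodule.add_mem _ hx hy
  | smul a x _ hx => rw [mul_smul_comm]; exact Submodule.smul_mem _ _ hx

lemma mulD_Kd (q : ℝ) (e d : A) (hde : d * e - q • (e * d) = 1) {k : ℕ} {x : A}
    (hx : x ∈ Kd e d k) : d * x ∈ Kd e d (k + 1) := by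
  induction hx using Submodule.span_induction with
  | mem x h =>
    obtain ⟨a, b, hab, rfl⟩ := h
    rw [← mul_assoc, d_pow q e d hde a, add_mul, smul_mul_assoc, smul_mul_assoc,
      mul_assoc, ← pow_succ' d b]
    refine Submodule.add_mem _ (Submodule.smul_mem _ _ (mem_Kd e d (by omega)))
      (Submodule.smul_mem _ _ (mem_Kd e d (by omega)))
  | zero => simpa using Submodule.zero_mem _
  | add x y _ _ hx hy => rw [mul_add]; exact Submodule.add_mem _ hx hy
  | smul a x _ hx => rw [mul_smul_comm]; exact Submodule.smul_mem _ _ hx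

def Pw (c : ℝ) (e d : A) : List Bool → A
  | [] => 1
  | b :: l => (c • (1 : A) + (if b then d else e)) * Pw c e d l

lemma Pw_struct (q c : ℝ) (e d : A) (hde : d * e - q • (e * d) = 1) :
    ∀ l : List Bool,
      Pw c e d l - (q ^ inv l) • (e ^ l.count false * d ^ l.count true) ∈
        Kd e d (l.length - 1) := by
  intro l
  induction l with
  | nil =>
    simp only [Pw, inv, List.count_nil, pow_zero, one_smul, List.length_nil,
      mul_one]
    rw [sub_self]
    exact Submodule.zero_mem _
  | cons b l ih =>
    set m := l.count false with hm
    set n := l.count true with hn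
    set T : A := (q ^ inv l) • (e ^ m * d ^ n) with hT
    set r : A := Pw c e d l - T with hrdef
    have hPl : Pw c e d l = T + r := by rw [hrdef]; abel
    have hr : r ∈ Kd e d (l.length - 1) := ih
    have hmn : m + n = l.length := count_ft l
    have hPmem : Pw c e d l ∈ Kd e d l.length := by
      rw [hPl]
      exact Submodule.add_mem _ (Submodule.smul_mem _ _ (mem_Kd e d (by omega)))
        (Kd_mono e d (Nat.sub_le _ _) hr)
    have hlen : (b :: l).length - 1 = l.length := by simp
    rw [hlen]
    have hxr : (if b then d else e) * r ∈ Kd e d l.length := by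
      cases l with
      | nil =>
        have hr0 : r = 0 := by
          rw [hrdef, hT, hm, hn]
          simp [Pw, inv]
        rw [hr0, mul_zero]; exact Submodule.zero_mem _
      | cons b' l' =>
        have h1 : (b' :: l').length - 1 + 1 = (b' :: l').length := by simp
        cases b
        · simpa using h1 ▸ mulE_Kd e d hr
        · simpa using h1 ▸ mulD_Kd q e d hde hr
    have hexp : Pw c e d (b :: l) = c • Pw c e d l + (if b then d else e) * Pw c e d l := by
      show (c • (1:A) + _) * _ = _
      rw [add_mul, smul_mul_assoc, one_mul]
    cases b with
    | false =>
      simp only [if_false, Bool.false_eq_true] at hexp hxr ⊢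
      have h2 : e * Pw c e d l = (q ^ inv l) • (e ^ (m+1) * d ^ n) + e * r := by
        rw [hPl, mul_add, hT, mul_smul_comm, ← mul_assoc, ← pow_succ']
      have hc1 : (false :: l).count false = m + 1 := by simp [List.count_cons, hm]
      have hc2 : (false :: l).count true = n := by simp [List.count_cons, hn]
      have hc3 : inv (false :: l) = inv l := by simp [inv]
      rw [hexp, h2, hc1, hc2, hc3]
      have heq : c • Pw c e d l + ((q ^ inv l) • (e ^ (m+1) * d ^ n) + e * r)
          - (q ^ inv l) • (e ^ (m+1) * d ^ n) = c • Pw c e d l + e * r := by abel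
      rw [heq]
      exact Submodule.add_mem _ (Submodule.smul_mem _ _ hPmem) hxr
    | true =>
      simp only [if_true] at hexp hxr ⊢
      have h2 : d * Pw c e d l = (q ^ inv l * q ^ m) • (e ^ m * d ^ (n+1))
          + (q ^ inv l * qInt q m) • (e ^ (m-1) * d ^ n) + d * r := by
        rw [hPl, mul_add, hT, mul_smul_comm, ← mul_assoc, d_pow q e d hde m,
          add_mul, smul_mul_assoc, smul_mul_assoc, mul_assoc, ← pow_succ' d n]
        module
      have hc1 : (true :: l).count false = m := by simp [List.count_cons, hm]
      have hc2 : (true :: l).count true = n + 1 := by simp [List.count_cons, hn]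
      have hc3 : inv (true :: l) = m + inv l := by simp [inv, hm]
      rw [hexp, h2, hc1, hc2, hc3]
      have heq : c • Pw c e d l + ((q ^ inv l * q ^ m) • (e ^ m * d ^ (n+1))
          + (q ^ inv l * qInt q m) • (e ^ (m-1) * d ^ n) + d * r)
          - (q ^ (m + inv l)) • (e ^ m * d ^ (n+1))
          = c • Pw c e d l + (q ^ inv l * qInt q m) • (e ^ (m-1) * d ^ n) + d * r := by
        module
      rw [heq]
      exact Submodule.add_mem _ (Submodule.add_mem _
        (Submodule.smul_mem _ _ hPmem)
        (Submodule.smul_mem _ _ (mem_Kd e d (by omega)))) hxr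

lemma Pw_mem (q c : ℝ) (e d : A) (hde : d * e - q • (e * d) = 1) (l : List Bool) :
    Pw c e d l ∈ Kd e d l.length := by
  have h := Pw_struct q c e d hde l
  have : Pw c e d l = (Pw c e d l - (q ^ inv l) • (e ^ l.count false * d ^ l.count true))
      + (q ^ inv l) • (e ^ l.count false * d ^ l.count true) := by abel
  rw [this]
  exact Submodule.add_mem _ (Kd_mono e d (Nat.sub_le _ _) h)
    (Submodule.smul_mem _ _ (mem_Kd e d (le_of_eq (count_ft l))))

lemma Rlem (q al ga : ℝ) (hq : 0 < q) (ha : 0 < al) (hg : 0 < ga) :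
    ∀ (L : ℕ) (k : ℕ) (τ : Fin L → Bool),
      (∏ j : Fin L, (if τ j then al / (al + ga * q ^ (k + (j : ℕ)))
          else 1 - al / (al + ga * q ^ (k + (j : ℕ)))))
      = q ^ (Ee (List.ofFn τ) + k * ((List.ofFn τ).count false))
          * al ^ ((List.ofFn τ).count true) * ga ^ ((List.ofFn τ).count false)
        / ∏ j ∈ Finset.range L, (al + ga * q ^ (k + j)) := by
  intro L
  induction L with
  | zero =>
    intro k τ
    simp [Ee, List.ofFn_zero]
  | succ L ih =>
    intro k τ
    have hden : ∀ j : ℕ, (0:ℝ) < al + ga * q ^ j := fun j => by positivity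
    rw [Fin.prod_univ_succ]
    have htail : (∏ j : Fin L, (if τ j.succ then al / (al + ga * q ^ (k + (j.succ : ℕ)))
        else 1 - al / (al + ga * q ^ (k + (j.succ : ℕ)))))
        = q ^ (Ee (List.ofFn fun j : Fin L => τ j.succ)
              + (k+1) * ((List.ofFn fun j : Fin L => τ j.succ).count false))
            * al ^ ((List.ofFn fun j : Fin L => τ j.succ).count true)
            * ga ^ ((List.ofFn fun j : Fin L => τ j.succ).count false)
          / ∏ j ∈ Finset.range L, (al + ga * q ^ ((k+1) + j)) := by
      rw [← ih (k+1) (fun j => τ j.succ)]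
      apply Finset.prod_congr rfl
      intro j _
      have hj : k + ((j.succ : Fin (L+1)) : ℕ) = (k+1) + (j : ℕ) := by
        simp [Fin.val_succ]; omega
      rw [hj]
    rw [htail, List.ofFn_succ]
    set l := (List.ofFn fun j : Fin L => τ j.succ) with hl
    set mt := l.count false with hmt
    set nt := l.count true with hnt
    have hEe : Ee (τ 0 :: l) = mt + Ee l := rfl
    rw [hEe]
    have hDen : (∏ j ∈ Finset.range (L+1), (al + ga * q ^ (k + j)))
        = (∏ j ∈ Finset.range L, (al + ga * q ^ ((k+1) + j))) * (al + ga * q ^ k) := by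
      rw [Finset.prod_range_succ']
      congr 1
      refine Finset.prod_congr rfl fun j _ => ?_
      have harg : k + (j+1) = (k+1)+j := by omega
      rw [harg]
    rw [hDen]
    have hD0 : (0:ℝ) < ∏ j ∈ Finset.range L, (al + ga * q ^ ((k+1) + j)) :=
      Finset.prod_pos (fun j _ => hden _)
    have hk0 : (0:ℝ) < al + ga * q ^ k := hden _
    cases hτ : τ 0 with
    | true =>
      simp only [List.count_cons, Fin.val_zero, hτ]
      norm_num
      rw [← hmt, ← hnt]
      field_simp
      ring
    | false =>
      simp only [List.count_cons, Fin.val_zero, hτ]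
      norm_num
      rw [← hmt, ← hnt]
      have h1 : 1 - al / (al + ga * q ^ k) = ga * q ^ k / (al + ga * q ^ k) := by
        rw [eq_div_iff hk0.ne', sub_mul, div_mul_cancel₀ _ hk0.ne']
        ring
      rw [h1]
      field_simp
      ring

end S13

open S13

theorem stmt13 (q α β γ δ : ℝ) (N : ℕ) (hq0 : 0 < q) (hq1 : q < 1)
    (hα : 0 < α) (hβ : 0 < β) (hγ : 0 < γ) (hδ : 0 < δ)
    (hsing : α * β = q ^ N * γ * δ)
    (A : Type*) [Ring A] [Algebra ℝ A] (e d : A)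
    (hde : d * e - q • (e * d) = 1)
    (E D : A)
    (hE : E = (theta q ^ 2) • (1 : A) + theta q • e)
    (hD : D = (theta q ^ 2) • (1 : A) + theta q • d)
    (φ : A →ₗ[ℝ] ℝ)
    (h0 : ∀ m n : ℕ, m + n ≤ N → φ (e ^ m * d ^ n) = 0)
    (h1 : ∀ m n : ℕ, m + n = N + 1 →
      φ (e ^ m * d ^ n) = α ^ n * γ ^ m * q ^ (m * (m - 1) / 2) /
        (theta q ^ (N + 1) * ∏ j ∈ Finset.range (N + 1), (α + q ^ j * γ))) :
    (∀ τ : Fin (N + 1) → Bool,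
      φ (List.ofFn fun j : Fin (N + 1) => if τ j then D else E).prod =
        ∏ j : Fin (N + 1),
          (if τ j then α / (α + γ * q ^ (j : ℕ))
            else 1 - α / (α + γ * q ^ (j : ℕ)))) ∧
    (∀ m n : ℕ, m + n ≤ N →
      φ ((α • E - γ • D) * (e ^ m * d ^ n)) = φ (e ^ m * d ^ n) ∧
      φ ((e ^ m * d ^ n) * (β • D - δ • E)) = φ (e ^ m * d ^ n)) := by
  have hθ : 0 < theta q := by
    have h2 : 0 < Real.sqrt (1 - q) := Real.sqrt_pos.mpr (by linarith)
    rw [theta]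
    positivity
  have hPprodpos : 0 < ∏ j ∈ Finset.range (N + 1), (α + q ^ j * γ) :=
    Finset.prod_pos fun j _ => by positivity
  have hker : ∀ x ∈ Kd e d N, φ x = 0 := by
    intro x hx
    induction hx using Submodule.span_induction with
    | mem x h => obtain ⟨a, b, hab, rfl⟩ := h; exact h0 a b hab
    | zero => exact map_zero φ
    | add x y _ _ hx hy => rw [map_add, hx, hy, add_zero]
    | smul a x _ hx => rw [map_smul, hx, smul_zero]
  have hch : ∀ m : ℕ, (m + 1) * ((m + 1) - 1) / 2 = m * (m - 1) / 2 + m := by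
    intro m
    calc (m + 1) * ((m + 1) - 1) / 2 = (m + 1).choose 2 := (Nat.choose_two_right _).symm
      _ = m.choose 1 + m.choose 2 := Nat.choose_succ_succ _ _
      _ = m * (m - 1) / 2 + m := by
          rw [Nat.choose_two_right, Nat.choose_one_right]; omega
  constructor
  · -- part (i)
    intro τ
    have hofn : (List.ofFn fun j : Fin (N + 1) => if τ j then D else E)
        = ((List.ofFn τ).map fun b => if b then D else E) := by
      rw [List.map_ofFn]; rfl
    have hDEb : ∀ b : Bool,
        (if b then D else E) = theta q • (theta q • (1 : A) + (if b then d else e)) := by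
      intro b; cases b <;> simp [hE, hD, smul_add, smul_smul, sq]
    have hprod : ∀ l' : List Bool, (l'.map fun b => if b then D else E).prod
        = theta q ^ l'.length • Pw (theta q) e d l' := by
      intro l'
      induction l' with
      | nil => simp [Pw]
      | cons b t ih =>
        rw [List.map_cons, List.prod_cons, ih, hDEb b, List.length_cons]
        show _ = theta q ^ (t.length + 1) •
          ((theta q • (1 : A) + if b then d else e) * Pw (theta q) e d t)
        rw [smul_mul_assoc, mul_smul_comm, smul_smul, ← pow_succ']
    set l : List Bool := List.ofFn τ with hldef
    have hlen : l.length = N + 1 := by simp [hldef]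
    rw [hofn, hprod, hlen, map_smul, smul_eq_mul]
    have hmn : l.count false + l.count true = N + 1 := by rw [count_ft, hlen]
    have hφP : φ (Pw (theta q) e d l)
        = q ^ inv l * (α ^ l.count true * γ ^ l.count false
            * q ^ (l.count false * (l.count false - 1) / 2) /
          (theta q ^ (N + 1) * ∏ j ∈ Finset.range (N + 1), (α + q ^ j * γ))) := by
      have hstruct := Pw_struct q (theta q) e d hde l
      have hl1 : l.length - 1 = N := by omega
      rw [hl1] at hstruct
      have hsplit : Pw (theta q) e d l
          = (Pw (theta q) e d l
              - (q ^ inv l) • (e ^ l.count false * d ^ l.count true))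
            + (q ^ inv l) • (e ^ l.count false * d ^ l.count true) := by abel
      rw [hsplit, map_add, hker _ hstruct, zero_add, map_smul, smul_eq_mul,
        h1 (l.count false) (l.count true) hmn]
    rw [hφP]
    have hR := Rlem q α γ hq0 hα hγ (N + 1) 0 τ
    simp only [Nat.zero_add, zero_add, Nat.zero_mul, zero_mul, add_zero, Nat.add_zero] at hR
    rw [← hldef] at hR
    rw [hR]
    have hprodeq : ∏ j ∈ Finset.range (N + 1), (α + γ * q ^ j)
        = ∏ j ∈ Finset.range (N + 1), (α + q ^ j * γ) :=
      Finset.prod_congr rfl fun j _ => by ring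
    rw [hprodeq, Ee_eq, pow_add, Nat.choose_two_right]
    field_simp
    ring
  · -- part (ii)
    intro m n hmn
    have hmn1 : m - 1 + n ≤ N := by omega
    constructor
    · have hcomb : α • E - γ • D
          = ((α - γ) * theta q ^ 2) • (1 : A) + (theta q * α) • e - (theta q * γ) • d := by
        rw [hE, hD]; module
      have hXe : e * (e ^ m * d ^ n) = e ^ (m + 1) * d ^ n := by
        rw [← mul_assoc, ← pow_succ']
      have hXd : d * (e ^ m * d ^ n)
          = (q ^ m) • (e ^ m * d ^ (n + 1)) + (qInt q m) • (e ^ (m - 1) * d ^ n) := by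
        rw [← mul_assoc, d_pow q e d hde m, add_mul, smul_mul_assoc, smul_mul_assoc,
          mul_assoc, ← pow_succ' d n]
      have hmul : (α • E - γ • D) * (e ^ m * d ^ n)
          = ((α - γ) * theta q ^ 2) • (e ^ m * d ^ n)
            + (theta q * α) • (e ^ (m + 1) * d ^ n)
            - (theta q * γ * q ^ m) • (e ^ m * d ^ (n + 1))
            - (theta q * γ * qInt q m) • (e ^ (m - 1) * d ^ n) := by
        rw [hcomb, sub_mul, add_mul, smul_mul_assoc, smul_mul_assoc, smul_mul_assoc,
          one_mul, hXe, hXd]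
        module
      rw [hmul]
      simp only [map_sub, map_add, map_smul, smul_eq_mul]
      rw [h0 m n hmn, h0 (m - 1) n hmn1]
      rcases Nat.lt_or_ge (m + n) N with hlt | hge
      · rw [h0 (m + 1) n (by omega), h0 m (n + 1) (by omega)]; ring
      · have hNe : m + n = N := le_antisymm hmn hge
        rw [h1 (m + 1) n (by omega), h1 m (n + 1) (by omega), hch m, pow_add]
        ring
    · have hcomb : β • D - δ • E
          = ((β - δ) * theta q ^ 2) • (1 : A) + (theta q * β) • d - (theta q * δ) • e := by
        rw [hE, hD]; module
      have hXd : (e ^ m * d ^ n) * d = e ^ m * d ^ (n + 1) := by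
        rw [mul_assoc, ← pow_succ]
      have hXe : (e ^ m * d ^ n) * e
          = (q ^ n) • (e ^ (m + 1) * d ^ n) + (qInt q n) • (e ^ m * d ^ (n - 1)) := by
        rw [mul_assoc, pow_e q e d hde n, mul_add, mul_smul_comm, mul_smul_comm,
          ← mul_assoc, ← pow_succ]
      have hmul : (e ^ m * d ^ n) * (β • D - δ • E)
          = ((β - δ) * theta q ^ 2) • (e ^ m * d ^ n)
            + (theta q * β) • (e ^ m * d ^ (n + 1))
            - (theta q * δ * q ^ n) • (e ^ (m + 1) * d ^ n)
            - (theta q * δ * qInt q n) • (e ^ m * d ^ (n - 1)) := by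
        rw [hcomb, mul_sub, mul_add, mul_smul_comm, mul_smul_comm, mul_smul_comm,
          mul_one, hXd, hXe]
        module
      rw [hmul]
      simp only [map_sub, map_add, map_smul, smul_eq_mul]
      rw [h0 m n hmn, h0 m (n - 1) (by omega)]
      rcases Nat.lt_or_ge (m + n) N with hlt | hge
      · rw [h0 m (n + 1) (by omega), h0 (m + 1) n (by omega)]; ring
      · have hNe : m + n = N := le_antisymm hmn hge
        rw [h1 m (n + 1) (by omega), h1 (m + 1) n (by omega), hch m, pow_add]
        have hqnm : q ^ n * q ^ m = q ^ N := by rw [← pow_add]; congr 1; omega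
        set Pi := theta q ^ (N + 1) * ∏ j ∈ Finset.range (N + 1), (α + q ^ j * γ) with hPi
        linear_combination (theta q * q ^ (m * (m - 1) / 2) * α ^ n * γ ^ m / Pi) * hsing
          - (theta q * δ * q ^ (m * (m - 1) / 2) * α ^ n * γ ^ (m + 1) / Pi) * hqnm

end
end
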